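/- arXiv:1605.08742 — 10 statements merged into one kernel-verified Lean document; each statement's English description precedes it below -/
import Mathlib

section
/- Let m ≥ 2, let B ∈ ℤ^{m×m} be invertible with columns B₁,…,B_m, let b ∈ ℤ^m be such that β := B⁻¹b ∈ ℤ^m, let M ∈ ℤ with M ≥ 0, and set C = M + ‖β‖_∞ + 1. Let q₁,…,q_{m−1} be pairwise coprime positive integers with q_i > C for all i. Let t ∈ ℝ^m be a nonzero vector satisfying tᵀ(B_i + (1/q_i)·B_m) = 0 for all i = 1,…,m−1. Then the hyperplane H = {z ∈ ℝ^m : tᵀz = 0} avoids −b + L₂ where L₂ = {By : y ∈ ℤ^m, ‖y‖_∞ ≤ M}; explicitly, for every y ∈ ℤ^m with ‖y‖_∞ ≤ M, if tᵀ(By − b) = 0 then By = b. -/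
/-!
Put `s := tᵀB`. The orthogonality conditions say `sᵢ = -sₘ / qᵢ`, and `sₘ ≠ 0` since `B` is
invertible and `t ≠ 0`. With `d := y - β`, the hypothesis `tᵀ(By - b) = s ⬝ d = 0` becomes
`dₘ = ∑ dᵢ / qᵢ`. Clearing denominators, pairwise coprimality gives `qᵢ ∣ dᵢ`, while
`|dᵢ| ≤ M + |βᵢ| < qᵢ`; so `dᵢ = 0` for `i < m`, then `dₘ = 0`, i.e. `y = β`.
-/

open Finset Matrix

section PartialFractions

variable {ι K : Type*} [Fintype ι] [DecidableEq ι] [Field K] [CharZero K]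

lemma sum_div_mul_prod_eq_intCast {q : ι → ℤ} (hq : ∀ i, q i ≠ 0) (d : ι → ℤ) :
    (∑ i, (d i : K) / q i) * ∏ i, (q i : K) = ((∑ i, d i * ∏ j ∈ univ.erase i, q j : ℤ) : K) := by
  push_cast
  rw [sum_mul]
  refine sum_congr rfl fun i _ => ?_
  have hqi : (q i : K) ≠ 0 := by exact_mod_cast hq i
  rw [← mul_prod_erase univ (fun j => (q j : K)) (mem_univ i)]
  field_simp

lemma dvd_of_intCast_eq_sum_div {q d : ι → ℤ} (hcop : Pairwise fun i j => IsCoprime (q i) (q j))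
    (hq : ∀ i, q i ≠ 0) {x : ℤ} (hx : (x : K) = ∑ i, (d i : K) / q i) (i : ι) : q i ∣ d i := by
  have hint : x * ∏ j, q j = ∑ j, d j * ∏ l ∈ univ.erase j, q l := by
    have := congrArg (· * ∏ j, (q j : K)) hx
    simp only [sum_div_mul_prod_eq_intCast hq] at this
    exact_mod_cast this
  have hrest : q i ∣ ∑ j ∈ univ.erase i, d j * ∏ l ∈ univ.erase j, q l :=
    dvd_sum fun j hj => (dvd_prod_of_mem q (mem_erase.mpr ⟨(ne_of_mem_erase hj).symm,
      mem_univ i⟩)).mul_left _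
  have hterm : q i ∣ d i * ∏ l ∈ univ.erase i, q l := by
    rw [← dvd_add_left hrest,
      add_sum_erase univ (fun j => d j * ∏ l ∈ univ.erase j, q l) (mem_univ i), ← hint]
    exact (dvd_prod_of_mem q (mem_univ i)).mul_left _
  have hcop_i : IsCoprime (q i) (∏ l ∈ univ.erase i, q l) :=
    IsCoprime.prod_right fun l hl => hcop (ne_of_mem_erase hl).symm
  exact hcop_i.dvd_of_dvd_mul_right hterm

lemma eq_zero_of_intCast_eq_sum_div {q d : ι → ℤ}
    (hcop : Pairwise fun i j => IsCoprime (q i) (q j)) (hd : ∀ i, |d i| < q i) {x : ℤ}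
    (hx : (x : K) = ∑ i, (d i : K) / q i) : d = 0 := by
  have hq : ∀ i, q i ≠ 0 := fun i => ((abs_nonneg _).trans_lt (hd i)).ne'
  funext i
  exact Int.eq_zero_of_abs_lt_dvd (dvd_of_intCast_eq_sum_div hcop hq hx i) (hd i)

end PartialFractions

lemma vecMul_intCast_ne_zero {n K : Type*} [Fintype n] [DecidableEq n] [Field K] [CharZero K]
    {B : Matrix n n ℤ} (hB : B.det ≠ 0) {t : n → K} (ht : t ≠ 0) :
    t ᵥ* B.map (Int.cast : ℤ → K) ≠ 0 := by
  have hdet : (B.map (Int.cast : ℤ → K)).det ≠ 0 := by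
    rw [← Int.cast_det]
    exact_mod_cast hB
  exact fun h => hdet (exists_vecMul_eq_zero_iff.mp ⟨t, ht, h⟩)

section LastCoordinate

variable {K : Type*} [Field K] {k : ℕ} {s : Fin (k + 1) → K} {q : Fin k → K}

lemma last_ne_zero_of_castSucc_add_div (hs : ∀ i, s i.castSucc + 1 / q i * s (Fin.last k) = 0)
    (hs0 : s ≠ 0) : s (Fin.last k) ≠ 0 := by
  intro hlast
  refine hs0 (funext fun j => Fin.lastCases hlast (fun i => ?_) j)
  simpa [hlast] using hs i

lemma dotProduct_eq_last_mul_sub_sum_div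
    (hs : ∀ i, s i.castSucc + 1 / q i * s (Fin.last k) = 0) (v : Fin (k + 1) → K) :
    s ⬝ᵥ v = s (Fin.last k) * (v (Fin.last k) - ∑ i, v i.castSucc / q i) := by
  have hcast : ∀ i, s i.castSucc = -(s (Fin.last k) / q i) := fun i => by
    linear_combination hs i
  simp only [dotProduct, Fin.sum_univ_castSucc, hcast, mul_sub, mul_sum]
  rw [add_comm, sub_eq_add_neg, ← sum_neg_distrib]
  exact congrArg _ (sum_congr rfl fun i _ => by ring)

end LastCoordinate

theorem stmt_2_general (k : ℕ)
    (B : Matrix (Fin (k + 1)) (Fin (k + 1)) ℤ) (hB : B.det ≠ 0)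
    (b β : Fin (k + 1) → ℤ) (hβ : B.mulVec β = b)
    (M : ℤ)
    (q : Fin k → ℤ)
    (hqcop : ∀ i j, i ≠ j → Int.gcd (q i) (q j) = 1)
    (hqbig : ∀ i j, M + |β j| + 1 < q i)
    (t : Fin (k + 1) → ℝ) (ht : t ≠ 0)
    (htq : ∀ i : Fin k,
      (∑ l, t l * ((B l i.castSucc : ℝ) + (1 / (q i : ℝ)) * (B l (Fin.last k) : ℝ))) = 0) :
    ∀ y : Fin (k + 1) → ℤ, (∀ j, |y j| ≤ M) →
      (∑ l, t l * ((B.mulVec y l - b l : ℤ) : ℝ)) = 0 → B.mulVec y = b := by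
  intro y hy hsum
  set s := t ᵥ* B.map (Int.cast : ℤ → ℝ)
  set d := y - β
  have hs : ∀ i, s i.castSucc + 1 / (q i : ℝ) * s (Fin.last k) = 0 := fun i => by
    rw [← htq i]
    simp only [s, vecMul, dotProduct, map_apply, mul_add, sum_add_distrib, mul_sum]
    ring_nf
  have hsd : s ⬝ᵥ (fun j => (d j : ℝ)) = 0 := by
    rw [← hsum, ← dotProduct_mulVec]
    refine sum_congr rfl fun l _ => congrArg _ ?_
    rw [← hβ, ← Pi.sub_apply, ← mulVec_sub, ← eq_intCast (Int.castRingHom ℝ), RingHom.map_mulVec]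
    rfl
  have hs_last : s (Fin.last k) ≠ 0 :=
    last_ne_zero_of_castSucc_add_div hs (vecMul_intCast_ne_zero hB ht)
  rw [dotProduct_eq_last_mul_sub_sum_div hs, mul_eq_zero, or_iff_right hs_last, sub_eq_zero] at hsd
  have hd0 : (fun i : Fin k => d i.castSucc) = 0 := eq_zero_of_intCast_eq_sum_div
    (fun i j hij => Int.isCoprime_iff_gcd_eq_one.mpr (hqcop i j hij))
    (fun i => (abs_sub _ _).trans_lt (by linarith [hy i.castSucc, hqbig i i.castSucc])) hsd
  have hd : d = 0 := funext fun j => Fin.lastCases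
    (by simpa [funext_iff.mp hd0] using hsd) (funext_iff.mp hd0) j
  rw [← hβ, ← sub_eq_zero.mp hd]

/-- Proposition `proj`: with `m = k + 1 ≥ 2`, pairwise coprime integers
`q₁, …, q_{m-1}` all greater than `C = M + ‖β‖_∞ + 1`, and `t ≠ 0` orthogonal to
the vectors `B_i + (1/q_i)·B_m` (for `i = 1, …, m-1`), the hyperplane
`{z | tᵀz = 0}` avoids `-b + L₂`, where `L₂ = {By : y ∈ ℤᵐ, ‖y‖_∞ ≤ M}`. -/
theorem stmt_2 (k : ℕ) (hk : 1 ≤ k)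
    (B : Matrix (Fin (k + 1)) (Fin (k + 1)) ℤ) (hB : B.det ≠ 0)
    (b β : Fin (k + 1) → ℤ) (hβ : B.mulVec β = b)
    (M : ℤ) (hM : 0 ≤ M)
    (q : Fin k → ℤ) (hqpos : ∀ i, 0 < q i)
    (hqcop : ∀ i j, i ≠ j → Int.gcd (q i) (q j) = 1)
    (hqbig : ∀ i j, M + |β j| + 1 < q i)
    (t : Fin (k + 1) → ℝ) (ht : t ≠ 0)
    (htq : ∀ i : Fin k,
      (∑ l, t l * ((B l i.castSucc : ℝ) + (1 / (q i : ℝ)) * (B l (Fin.last k) : ℝ))) = 0) :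
    ∀ y : Fin (k + 1) → ℤ, (∀ j, |y j| ≤ M) →
      (∑ l, t l * ((B.mulVec y l - b l : ℤ) : ℝ)) = 0 → B.mulVec y = b :=
  stmt_2_general k B hB b β hβ M q hqcop hqbig t ht htq
end

section
/- Let A ∈ ℤ^{m×n}, u ∈ ℤ^n with u ≥ 0, and b ∈ ℤ^m with b ∈ L(A) = {Ax : x ∈ ℤ^n}. Then there exists a strong aggregation matrix T ∈ ℚ^{1×m} of size one for the bounded system (F^B), i.e. T with {x ∈ ℤ^n : 0 ≤ x ≤ u, Ax = b} = {x ∈ ℤ^n : 0 ≤ x ≤ u, (TA)x = Tb}. -/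
/-!
The box `0 ≤ x ≤ u` contains only finitely many integer points, so only finitely many vectors
`Ax - b` have to stay nonzero after aggregation. Over the infinite field `ℚ`, a finite union of
proper hyperplanes `{t | t ⬝ᵥ w = 0}` cannot cover everything, so some single row `t` satisfies
`t ⬝ᵥ (Ax - b) ≠ 0` for each of them.
-/

open Matrix

theorem Matrix.exists_dotProduct_ne_zero {ι K n : Type*} [Finite ι] [Field K] [Infinite K]
    [Fintype n] [DecidableEq n] (v : ι → n → K) (hv : ∀ i, v i ≠ 0) :
    ∃ t : n → K, ∀ i, t ⬝ᵥ v i ≠ 0 := by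
  obtain ⟨f, hf⟩ := Module.exists_dual_forall_apply_ne_zero (K := K) v hv
  refine ⟨(dotProductEquiv K n).symm f, fun i => ?_⟩
  simpa only [← dotProductEquiv_apply_apply, LinearEquiv.apply_symm_apply] using hf i

theorem Matrix.exists_dotProduct_eq_iff_of_finite {K n : Type*} [Field K] [Infinite K]
    [Fintype n] [DecidableEq n] {Y : Set (n → K)} (hY : Y.Finite) (b : n → K) :
    ∃ t : n → K, ∀ y ∈ Y, t ⬝ᵥ y = t ⬝ᵥ b ↔ y = b := by
  have : Finite {y // y ∈ Y ∧ y ≠ b} := (hY.subset fun _ hy => hy.1).to_subtype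
  obtain ⟨t, ht⟩ := exists_dotProduct_ne_zero (fun y : {y // y ∈ Y ∧ y ≠ b} => (y : n → K) - b)
    fun y => sub_ne_zero.mpr y.2.2
  refine ⟨t, fun y hy => ⟨fun hty => ?_, fun hyb => hyb ▸ rfl⟩⟩
  by_contra hyb
  exact ht ⟨y, hy, hyb⟩ (by rw [dotProduct_sub, hty, sub_self])

theorem Matrix.map_intCast_mulVec {m n R : Type*} [Fintype n] [Ring R]
    (A : Matrix m n ℤ) (x : n → ℤ) :
    A.map (Int.cast : ℤ → R) *ᵥ (fun j => (x j : R)) = fun i => ((A *ᵥ x) i : R) :=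
  funext fun i => (RingHom.map_mulVec (Int.castRingHom R) A x i).symm

theorem stmt_4_general (m n : ℕ) (A : Matrix (Fin m) (Fin n) ℤ) (b : Fin m → ℤ)
    (u : Fin n → ℤ) :
    ∃ T : Matrix (Fin 1) (Fin m) ℚ,
      {x : Fin n → ℤ | 0 ≤ x ∧ x ≤ u ∧ A.mulVec x = b} =
        {x : Fin n → ℤ | 0 ≤ x ∧ x ≤ u ∧
          (T * A.map (Int.cast : ℤ → ℚ)).mulVec (fun j => (x j : ℚ)) =
            T.mulVec (fun i => (b i : ℚ))} := by
  let castVec : (Fin m → ℤ) → Fin m → ℚ := fun v i => (v i : ℚ)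
  have hY : ((fun x => castVec (A *ᵥ x)) '' Set.Icc 0 u).Finite :=
    (Set.finite_Icc 0 u).image _
  obtain ⟨t, ht⟩ := exists_dotProduct_eq_iff_of_finite hY (castVec b)
  refine ⟨replicateRow (Fin 1) t, Set.ext fun x =>
    and_congr_right fun hx0 => and_congr_right fun hxu => ?_⟩
  rw [← mulVec_mulVec, map_intCast_mulVec, replicateRow_mulVec_eq_const,
    replicateRow_mulVec_eq_const, Function.const_inj, ht _ ⟨x, ⟨hx0, hxu⟩, rfl⟩]
  exact ⟨fun h => h ▸ rfl, fun h => funext fun i => Int.cast_injective (congrFun h i)⟩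

/-- Proposition `projT` (existence part): for any bounded system `(F^B)` with
`b ∈ L(A)`, there exists a strong aggregation matrix `T` of size one. -/
theorem stmt_4 (m n : ℕ) (A : Matrix (Fin m) (Fin n) ℤ) (b : Fin m → ℤ)
    (u : Fin n → ℤ) (hu : 0 ≤ u)
    (hb : ∃ x : Fin n → ℤ, A.mulVec x = b) :
    ∃ T : Matrix (Fin 1) (Fin m) ℚ,
      {x : Fin n → ℤ | 0 ≤ x ∧ x ≤ u ∧ A.mulVec x = b} =
        {x : Fin n → ℤ | 0 ≤ x ∧ x ≤ u ∧
          (T * A.map (Int.cast : ℤ → ℚ)).mulVec (fun j => (x j : ℚ)) =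
            T.mulVec (fun i => (b i : ℚ))} :=
  stmt_4_general m n A b u
end

section
/- Let A ∈ ℤ^{m×n}, b ∈ ℤ^m, u ∈ ℤ^n with u ≥ 0, and let M' ∈ ℕ satisfy ‖Ax‖_∞ ≤ M' for all x ∈ ℤ^n with 0 ≤ x ≤ u. Let q₁,…,q_{m−1} be pairwise coprime positive integers, each strictly greater than M' + ‖b‖_∞. Then the row vector T = (1/q₁, 1/q₂, …, 1/q_{m−1}, −1) ∈ ℚ^{1×m} is a strong aggregation matrix for the bounded system (F^B): for every x ∈ ℤ^n with 0 ≤ x ≤ u, Ax = b if and only if (TA)x = Tb. -/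
/-!
Write `d = Ax - b`. Since `T(Ax) = Tb` reads `∑ᵢ dᵢ / qᵢ = d_m` with `d_m ∈ ℤ`, clearing
denominators gives `∑ᵢ dᵢ ∏_{j ≠ i} q_j = d_m ∏_j q_j`. Reducing modulo `qᵢ` and using that
`qᵢ` is coprime to the other `q_j` yields `qᵢ ∣ dᵢ`; as `|dᵢ| ≤ M' + ‖b‖_∞ < qᵢ`, every `dᵢ`
vanishes, and then so does `d_m`.
-/

open Finset Function Matrix

theorem Finset.sum_div_mul_prod {ι K : Type*} [DecidableEq ι] [Field K] (s : Finset ι)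
    {q : ι → K} (hq : ∀ i ∈ s, q i ≠ 0) (d : ι → K) :
    (∑ i ∈ s, d i / q i) * ∏ j ∈ s, q j = ∑ i ∈ s, d i * ∏ j ∈ s.erase i, q j := by
  rw [sum_mul]
  refine sum_congr rfl fun i hi => ?_
  rw [← mul_prod_erase s q hi, div_mul_eq_mul_div, mul_comm (q i), ← mul_assoc,
    mul_div_assoc, div_self (hq i hi), mul_one]

theorem Int.dvd_of_sum_mul_prod_erase_eq {ι : Type*} [DecidableEq ι] {s : Finset ι}
    {q : ι → ℤ} (hcop : (s : Set ι).Pairwise (IsCoprime on q)) {d : ι → ℤ} {c : ℤ}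
    (h : ∑ j ∈ s, d j * ∏ l ∈ s.erase j, q l = c * ∏ l ∈ s, q l) {i : ι} (hi : i ∈ s) :
    q i ∣ d i := by
  have hrest : q i ∣ ∑ j ∈ s.erase i, d j * ∏ l ∈ s.erase j, q l :=
    dvd_sum fun j hj => (dvd_prod_of_mem q
      (mem_erase.2 ⟨(ne_of_mem_erase hj).symm, hi⟩)).mul_left _
  have hall : q i ∣ ∑ j ∈ s, d j * ∏ l ∈ s.erase j, q l :=
    h ▸ (dvd_prod_of_mem q hi).mul_left c
  rw [← add_sum_erase s _ hi, dvd_add_left hrest] at hall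
  exact (IsCoprime.prod_right fun j hj =>
    hcop hi (mem_of_mem_erase hj) (ne_of_mem_erase hj).symm).dvd_of_dvd_mul_right hall

theorem Int.eq_zero_of_sum_div_eq_intCast {ι : Type*} {s : Finset ι} {q : ι → ℤ}
    (hcop : (s : Set ι).Pairwise (IsCoprime on q)) {d : ι → ℤ} (hd : ∀ i ∈ s, |d i| < q i)
    {c : ℤ} (h : ∑ i ∈ s, (d i : ℚ) / q i = c) : ∀ i ∈ s, d i = 0 := by
  classical
  have hq : ∀ i ∈ s, (q i : ℚ) ≠ 0 := fun i hi =>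
    Int.cast_ne_zero.2 ((abs_nonneg _).trans_lt (hd i hi)).ne'
  have hcleared : ∑ j ∈ s, d j * ∏ l ∈ s.erase j, q l = c * ∏ l ∈ s, q l := by
    have := congrArg (· * ∏ l ∈ s, (q l : ℚ)) h
    simp only [sum_div_mul_prod s hq] at this
    exact_mod_cast this
  exact fun i hi => Int.eq_zero_of_abs_lt_dvd
    (Int.dvd_of_sum_mul_prod_erase_eq hcop hcleared hi) (hd i hi)

theorem eq_zero_of_sum_castSucc_div_eq_last {k : ℕ} {q : Fin k → ℤ}
    (hcop : Pairwise (IsCoprime on q)) {d : Fin (k + 1) → ℤ}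
    (hd : ∀ i, |d i.castSucc| < q i)
    (h : ∑ i, (d i.castSucc : ℚ) / q i = d (Fin.last k)) : d = 0 := by
  have hinit : ∀ i : Fin k, d i.castSucc = 0 := fun i =>
    Int.eq_zero_of_sum_div_eq_intCast (hcop.set_pairwise _) (fun i _ => hd i) h i (mem_univ i)
  have hlast : d (Fin.last k) = 0 := by
    simpa [hinit] using h.symm
  funext i
  exact Fin.lastCases hlast hinit i

theorem Matrix.mulVec_apply_eq_sum_div_sub_last {k : ℕ} (q : Fin k → ℤ)
    (T : Matrix (Fin 1) (Fin (k + 1)) ℚ) (hT : ∀ i : Fin k, T 0 i.castSucc = 1 / (q i : ℚ))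
    (hTlast : T 0 (Fin.last k) = -1) (v : Fin (k + 1) → ℚ) :
    (T *ᵥ v) 0 = ∑ i : Fin k, v i.castSucc / q i - v (Fin.last k) := by
  simp only [mulVec, dotProduct, Fin.sum_univ_castSucc, hT, hTlast, one_div, inv_mul_eq_div]
  ring

theorem stmt_5_general (k n : ℕ) (A : Matrix (Fin (k + 1)) (Fin n) ℤ)
    (b : Fin (k + 1) → ℤ) (u : Fin n → ℤ)
    (M' : ℕ)
    (hM' : ∀ x : Fin n → ℤ, 0 ≤ x → x ≤ u → ∀ i, |A.mulVec x i| ≤ (M' : ℤ))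
    (q : Fin k → ℤ)
    (hqcop : ∀ i j, i ≠ j → Int.gcd (q i) (q j) = 1)
    (hqbig : ∀ i j, (M' : ℤ) + |b j| < q i)
    (T : Matrix (Fin 1) (Fin (k + 1)) ℚ)
    (hT : ∀ i : Fin k, T 0 i.castSucc = 1 / (q i : ℚ))
    (hTlast : T 0 (Fin.last k) = -1) :
    ∀ x : Fin n → ℤ, 0 ≤ x → x ≤ u →
      (A.mulVec x = b ↔
        (T * A.map (Int.cast : ℤ → ℚ)).mulVec (fun j => (x j : ℚ)) =
          T.mulVec (fun i => (b i : ℚ))) := by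
  intro x hx0 hxu
  have hcast : A.map (Int.cast : ℤ → ℚ) *ᵥ (fun j => (x j : ℚ)) = fun i => ((A *ᵥ x) i : ℚ) :=
    funext fun i => (RingHom.map_mulVec (Int.castRingHom ℚ) A x i).symm
  rw [← Matrix.mulVec_mulVec, hcast]
  refine ⟨fun h => by rw [h], fun h => ?_⟩
  set d := A *ᵥ x - b with hd
  have hsum : ∑ i : Fin k, (d i.castSucc : ℚ) / q i = d (Fin.last k) := by
    have hdiff : (fun i => ((A *ᵥ x) i : ℚ)) - (fun i => (b i : ℚ)) = fun i => (d i : ℚ) := by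
      funext i
      simp [hd]
    have h0 := congrFun (sub_eq_zero.2 h) 0
    rw [← mulVec_sub, hdiff, mulVec_apply_eq_sum_div_sub_last q T hT hTlast] at h0
    exact sub_eq_zero.1 h0
  have hbound : ∀ i, |d i.castSucc| < q i := fun i =>
    calc |d i.castSucc| ≤ |(A *ᵥ x) i.castSucc| + |b i.castSucc| := abs_sub _ _
      _ ≤ M' + |b i.castSucc| := by gcongr; exact hM' x hx0 hxu _
      _ < q i := hqbig i i.castSucc
  have hcop : Pairwise (IsCoprime on q) := fun i j hij =>
    Int.isCoprime_iff_gcd_eq_one.2 (hqcop i j hij)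
  exact sub_eq_zero.1 (eq_zero_of_sum_castSucc_div_eq_last hcop hbound hsum)

/-- Corollary `explicitT`: with `m = k + 1`, if `‖Ax‖_∞ ≤ M'` on the box
`0 ≤ x ≤ u` and `q₁, …, q_{m-1}` are pairwise coprime positive integers all
greater than `M' + ‖b‖_∞`, then `T = (1/q₁, …, 1/q_{m-1}, -1)` is a strong
aggregation matrix for the bounded system `(F^B)`. -/
theorem stmt_5 (k n : ℕ) (A : Matrix (Fin (k + 1)) (Fin n) ℤ)
    (b : Fin (k + 1) → ℤ) (u : Fin n → ℤ) (hu : 0 ≤ u)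
    (M' : ℕ)
    (hM' : ∀ x : Fin n → ℤ, 0 ≤ x → x ≤ u → ∀ i, |A.mulVec x i| ≤ (M' : ℤ))
    (q : Fin k → ℤ) (hqpos : ∀ i, 0 < q i)
    (hqcop : ∀ i j, i ≠ j → Int.gcd (q i) (q j) = 1)
    (hqbig : ∀ i j, (M' : ℤ) + |b j| < q i)
    (T : Matrix (Fin 1) (Fin (k + 1)) ℚ)
    (hT : ∀ i : Fin k, T 0 i.castSucc = 1 / (q i : ℚ))
    (hTlast : T 0 (Fin.last k) = -1) :
    ∀ x : Fin n → ℤ, 0 ≤ x → x ≤ u →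
      (A.mulVec x = b ↔
        (T * A.map (Int.cast : ℤ → ℚ)).mulVec (fun j => (x j : ℚ)) =
          T.mulVec (fun i => (b i : ℚ))) :=
  stmt_5_general k n A b u M' hM' q hqcop hqbig T hT hTlast
end

section
/- Let A ∈ ℤ^{m×n}, b ∈ ℤ^m, and let h ∈ ℤ^m satisfy hᵀA_j ≥ ‖A_j‖₁ + 1 for every column A_j of A (where ‖A_j‖₁ = Σ_i |A_{ij}|). Set M = (max_{1≤i≤m} Σ_j |A_{ij}|)·(‖h‖_∞ + 1)·‖b‖₁ + ‖b‖_∞. Then for every η ∈ ℝ^m with ‖η‖_∞ ≤ 1 and every x ∈ ℝ^n with x ≥ 0 satisfying (h + η)ᵀ(Ax − b) = 0, one has ‖Ax − b‖_∞ ≤ M. In particular the set (−b + C(A)) ∩ {y ∈ ℝ^m : (h+η)ᵀy = 0} is bounded and every y in it satisfies ‖y‖_∞ ≤ M. -/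
/-!
Write `c = h + η` and `y = A x - b`. Since `|η i| ≤ 1`, every column satisfies
`cᵀA_j ≥ hᵀA_j - ‖A_j‖₁ ≥ 1`, so `cᵀy = 0` gives
`∑ x_j ≤ ∑ (cᵀA_j) x_j = cᵀb ≤ (‖h‖_∞ + 1) ‖b‖₁`.
Hence `|(A x)_i| ≤ (∑_j |A_ij|) ∑ x_j` is bounded, and so is `|y_i| ≤ |(A x)_i| + |b_i|`.
-/

open Matrix Finset

section

variable {R : Type*} [CommRing R] [LinearOrder R] [IsStrictOrderedRing R] {ι κ : Type*}

theorem abs_dotProduct_le_mul_sum_abs [Fintype ι] {c : ι → R} {C : R} (hc : ∀ i, |c i| ≤ C)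
    (v : ι → R) : |c ⬝ᵥ v| ≤ C * ∑ i, |v i| := by
  rw [mul_sum]
  calc |c ⬝ᵥ v| ≤ ∑ i, |c i * v i| := abs_sum_le_sum_abs _ _
    _ ≤ ∑ i, C * |v i| := sum_le_sum fun i _ => by
      rw [abs_mul]; exact mul_le_mul_of_nonneg_right (hc i) (abs_nonneg _)

theorem one_le_add_dotProduct_of_abs_le_one [Fintype ι] {a h η : ι → R}
    (ha : ∑ i, |a i| + 1 ≤ h ⬝ᵥ a) (hη : ∀ i, |η i| ≤ 1) : 1 ≤ (h + η) ⬝ᵥ a := by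
  have hηa := neg_abs_le (η ⬝ᵥ a)
  have hηa_abs := abs_dotProduct_le_mul_sum_abs hη a
  rw [add_dotProduct]
  linarith

theorem sum_le_dotProduct_mulVec [Fintype ι] [Fintype κ] {A : Matrix ι κ R} {c : ι → R}
    {x : κ → R} (hA : ∀ j, 1 ≤ (c ᵥ* A) j) (hx : 0 ≤ x) : ∑ j, x j ≤ c ⬝ᵥ (A *ᵥ x) := by
  rw [dotProduct_mulVec]
  exact sum_le_sum fun j _ => le_mul_of_one_le_left (hx j) (hA j)

theorem abs_mulVec_le_sum_mul_sum_abs [Fintype κ] (A : Matrix ι κ R) {x : κ → R} (hx : 0 ≤ x)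
    (i : ι) :
    |(A *ᵥ x) i| ≤ (∑ j, x j) * ∑ j, |A i j| := by
  rw [mulVec_apply, dotProduct_comm]
  refine abs_dotProduct_le_mul_sum_abs (fun j => ?_) _
  rw [abs_of_nonneg (hx j)]
  exact single_le_sum (fun k _ => hx k) (mem_univ j)

end

/-- Lemma `boundedintersection`: if `hᵀA_j ≥ ‖A_j‖₁ + 1` for every column of
`A`, then with `M = ‖A‖_∞·(‖h‖_∞ + 1)·‖b‖₁ + ‖b‖_∞`, for every perturbation
`η` with `‖η‖_∞ ≤ 1`, any point of `-b + C(A)` on the hyperplane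
`{y | (h+η)ᵀy = 0}` has `‖·‖_∞` at most `M`. -/
theorem stmt_7 (m n : ℕ) (hm : 0 < m)
    (A : Matrix (Fin m) (Fin n) ℤ) (b : Fin m → ℤ) (h : Fin m → ℤ)
    (hh : ∀ j : Fin n, (∑ i, |A i j|) + 1 ≤ ∑ i, h i * A i j)
    (M : ℤ)
    (hM : M =
      (Finset.univ.sup' (Finset.univ_nonempty_iff.mpr ⟨⟨0, hm⟩⟩)
          fun i : Fin m => ∑ j, |A i j|) *
        ((Finset.univ.sup' (Finset.univ_nonempty_iff.mpr ⟨⟨0, hm⟩⟩)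
          fun i : Fin m => |h i|) + 1) * (∑ i, |b i|) +
        Finset.univ.sup' (Finset.univ_nonempty_iff.mpr ⟨⟨0, hm⟩⟩)
          fun i : Fin m => |b i|) :
    ∀ η : Fin m → ℝ, (∀ i, |η i| ≤ 1) →
      ∀ x : Fin n → ℝ, 0 ≤ x →
        (∑ i, ((h i : ℝ) + η i) *
          ((A.map (Int.cast : ℤ → ℝ)).mulVec x i - (b i : ℝ))) = 0 →
        ∀ i, |(A.map (Int.cast : ℤ → ℝ)).mulVec x i - (b i : ℝ)| ≤ (M : ℝ) := by
  intro η hη x hx hcon i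
  have hne : (univ : Finset (Fin m)).Nonempty := univ_nonempty_iff.mpr ⟨⟨0, hm⟩⟩
  set Ar : ℝ := ((univ.sup' hne fun k => ∑ j, |A k j| : ℤ) : ℝ)
  set Hr : ℝ := ((univ.sup' hne fun k => |h k| : ℤ) : ℝ)
  set Br : ℝ := ((univ.sup' hne fun k => |b k| : ℤ) : ℝ)
  set A' := A.map (Int.cast : ℤ → ℝ)
  set c : Fin m → ℝ := (fun k => (h k : ℝ)) + η
  have hcol : ∀ j, 1 ≤ (c ᵥ* A') j := fun j => by
    refine one_le_add_dotProduct_of_abs_le_one ?_ hη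
    simpa [A', dotProduct] using (Int.cast_le (R := ℝ)).2 (hh j)
  have hc : ∀ k, |c k| ≤ Hr + 1 := fun k =>
    (abs_add_le _ _).trans (add_le_add
      (by simpa using (Int.cast_le (R := ℝ)).2 (le_sup' (fun k => |h k|) (mem_univ k))) (hη k))
  have hS : ∑ j, x j ≤ (Hr + 1) * ∑ k, |(b k : ℝ)| := by
    have hcon : c ⬝ᵥ (A' *ᵥ x - fun k => (b k : ℝ)) = 0 := hcon
    rw [dotProduct_sub, sub_eq_zero] at hcon
    exact (hcon ▸ sum_le_dotProduct_mulVec hcol hx).trans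
      ((le_abs_self _).trans (abs_dotProduct_le_mul_sum_abs hc _))
  have hrow : ∑ j, |A' i j| ≤ Ar := by
    simpa [A'] using (Int.cast_le (R := ℝ)).2 (le_sup' (fun k => ∑ j, |A k j|) (mem_univ i))
  have hbi : |(b i : ℝ)| ≤ Br := by
    simpa using (Int.cast_le (R := ℝ)).2 (le_sup' (fun k => |b k|) (mem_univ i))
  calc |(A' *ᵥ x) i - b i| ≤ |(A' *ᵥ x) i| + |(b i : ℝ)| := abs_sub _ _
    _ ≤ (∑ j, x j) * ∑ j, |A' i j| + Br := add_le_add (abs_mulVec_le_sum_mul_sum_abs A' hx i) hbi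
    _ ≤ (Hr + 1) * (∑ k, |(b k : ℝ)|) * Ar + Br := by
      gcongr
      exact (sum_nonneg fun j _ => hx j).trans hS
    _ = M := by rw [hM]; push_cast; ring
end

section
/- Let A ∈ ℤ^{m×n}, b ∈ ℤ^m, and let h ∈ ℤ^m satisfy hᵀA_j ≥ ‖A_j‖₁ + 1 for every column A_j of A. Set M = (max_{1≤i≤m} Σ_j |A_{ij}|)·(‖h‖_∞ + 1)·‖b‖₁ + ‖b‖_∞, and let q₁,…,q_m be pairwise coprime positive integers, each strictly greater than M. Let T = hᵀ + (1/q₁, 1/q₂, …, 1/q_m) ∈ ℚ^{1×m}. Then the hyperplane {y ∈ ℝ^m : Ty = 0} avoids −b + L⁺(A); explicitly, for every x ∈ ℤ^n with x ≥ 0, if T(Ax − b) = 0 then Ax = b. -/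
/-!
Write `y = Ax - b`. Clearing the fractional part of `T y = 0` leaves
`Σ yᵢ / qᵢ = -hᵀy ∈ ℤ`, and `|hᵀy| ≤ ‖y‖₁`. Since every column satisfies
`hᵀA_j ≥ ‖A_j‖₁ + 1`, for `x ≥ 0` we get `hᵀAx ≥ ‖Ax‖₁ + Σ xⱼ`, and comparing the two
bounds on `hᵀy` gives `Σ xⱼ ≤ (‖h‖_∞ + 1)‖b‖₁`, hence `|yᵢ| ≤ M < qᵢ` for every `i`.
Finally, if `Σ yᵢ / qᵢ` is an integer and the denominators are pairwise coprime, then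
`qᵢ ∣ yᵢ` for each `i`, which together with `|yᵢ| < qᵢ` forces `y = 0`.
-/

open Finset Matrix

section Fractions

variable {ι : Type*} [Fintype ι] {q y : ι → ℤ}

lemma abs_intCast_div_intCast_le (a b : ℤ) : |(a : ℚ) / b| ≤ |(a : ℚ)| := by
  rcases eq_or_ne b 0 with rfl | hb
  · simp
  rw [abs_div]
  exact div_le_self (abs_nonneg _) (by exact_mod_cast Int.one_le_abs hb)

lemma abs_sum_intCast_div_le (q y : ι → ℤ) : |∑ i, (y i : ℚ) / q i| ≤ ∑ i, |y i| := by
  push_cast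
  exact (abs_sum_le_sum_abs _ _).trans
    (sum_le_sum fun i _ => abs_intCast_div_intCast_le (y i) (q i))

lemma dvd_of_sum_div_eq_intCast (hq : ∀ i, q i ≠ 0)
    (hcop : Pairwise fun i j => IsCoprime (q i) (q j)) {N : ℤ}
    (hN : ∑ i, (y i : ℚ) / q i = N) (k : ι) : q k ∣ y k := by
  classical
  set P : ι → ℤ := fun i => ∏ j ∈ univ.erase i, q j
  have hclear : ∑ i, y i * P i = N * ∏ j, q j := by
    have hterm (i : ι) :
        (y i : ℚ) * ∏ j ∈ univ.erase i, (q j : ℚ) = (y i : ℚ) / q i * ∏ j, (q j : ℚ) := by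
      rw [← mul_prod_erase univ (fun j => (q j : ℚ)) (mem_univ i)]
      field_simp [show (q i : ℚ) ≠ 0 by exact_mod_cast hq i]
    have : ((∑ i, y i * P i : ℤ) : ℚ) = ((N * ∏ j, q j : ℤ) : ℚ) := by
      push_cast [P]
      simp_rw [hterm]
      rw [← sum_mul, hN]
    exact_mod_cast this
  have hrest : q k ∣ ∑ i ∈ univ.erase k, y i * P i :=
    dvd_sum fun i hi => (dvd_prod_of_mem q
      (mem_erase.mpr ⟨(ne_of_mem_erase hi).symm, mem_univ k⟩)).mul_left _
  have hk : q k ∣ y k * P k := by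
    rw [← add_sum_erase univ (fun i => y i * P i) (mem_univ k)] at hclear
    rw [← dvd_add_left hrest, hclear]
    exact (dvd_prod_of_mem q (mem_univ k)).mul_left _
  have hkP : IsCoprime (q k) (P k) :=
    IsCoprime.prod_right fun i hi => hcop (ne_of_mem_erase hi).symm
  exact hkP.dvd_of_dvd_mul_right hk

lemma eq_zero_of_sum_div_eq_intCast (hcop : Pairwise fun i j => IsCoprime (q i) (q j))
    (hy : ∀ i, |y i| < q i) {N : ℤ} (hN : ∑ i, (y i : ℚ) / q i = N) : y = 0 := by
  have hq (i : ι) : q i ≠ 0 := ((abs_nonneg _).trans_lt (hy i)).ne'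
  funext k
  exact Int.eq_zero_of_abs_lt_dvd (dvd_of_sum_div_eq_intCast hq hcop hN k) (hy k)

end Fractions

section Aggregation

variable {ι κ : Type*} [Fintype κ] {A : Matrix ι κ ℤ} {x : κ → ℤ}

lemma abs_mulVec_le_sum (hx : 0 ≤ x) (i : ι) : |(A *ᵥ x) i| ≤ ∑ j, |A i j| * x j := by
  refine (abs_sum_le_sum_abs _ _).trans_eq (sum_congr rfl fun j _ => ?_)
  rw [abs_mul, abs_of_nonneg (hx j)]

lemma abs_mulVec_le (hx : 0 ≤ x) {α : ℤ} (i : ι) (hα : ∑ j, |A i j| ≤ α) :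
    |(A *ᵥ x) i| ≤ α * ∑ j, x j := by
  rw [mul_sum]
  refine (abs_mulVec_le_sum hx i).trans (sum_le_sum fun j _ => ?_)
  gcongr
  · exact hx j
  · exact (single_le_sum (fun j _ => abs_nonneg (A i j)) (mem_univ j)).trans hα

lemma sum_abs_mulVec_add_sum_le_dotProduct [Fintype ι] {h : ι → ℤ}
    (hh : ∀ j, (∑ i, |A i j|) + 1 ≤ ∑ i, h i * A i j) (hx : 0 ≤ x) :
    ∑ i, |(A *ᵥ x) i| + ∑ j, x j ≤ h ⬝ᵥ (A *ᵥ x) :=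
  calc ∑ i, |(A *ᵥ x) i| + ∑ j, x j
      ≤ ∑ i, ∑ j, |A i j| * x j + ∑ j, x j := by
        gcongr with i; exact abs_mulVec_le_sum hx i
    _ = ∑ j, ((∑ i, |A i j|) + 1) * x j := by
        rw [sum_comm, ← sum_add_distrib]
        simp only [add_mul, one_mul, sum_mul]
    _ ≤ ∑ j, (h ᵥ* A) j * x j := by
        gcongr with j
        · exact hx j
        · simpa [vecMul, dotProduct] using hh j
    _ = h ⬝ᵥ (A *ᵥ x) := by rw [dotProduct_mulVec]; rfl

lemma sum_le_of_abs_dotProduct_mulVec_sub_le [Fintype ι] {h b : ι → ℤ}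
    (hh : ∀ j, (∑ i, |A i j|) + 1 ≤ ∑ i, h i * A i j) (hx : 0 ≤ x) {H : ℤ}
    (hH : ∀ i, |h i| ≤ H) (hN : |h ⬝ᵥ (A *ᵥ x - b)| ≤ ∑ i, |(A *ᵥ x - b) i|) :
    ∑ j, x j ≤ (H + 1) * ∑ i, |b i| := by
  have hAx := sum_abs_mulVec_add_sum_le_dotProduct hh hx
  have hy : ∑ i, |(A *ᵥ x - b) i| ≤ ∑ i, |(A *ᵥ x) i| + ∑ i, |b i| := by
    rw [← sum_add_distrib]
    exact sum_le_sum fun i _ => abs_sub _ _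
  have hb : h ⬝ᵥ b ≤ H * ∑ i, |b i| := by
    rw [mul_sum]
    refine sum_le_sum fun i _ => (le_abs_self _).trans ?_
    rw [abs_mul]
    exact mul_le_mul_of_nonneg_right (hH i) (abs_nonneg _)
  rw [dotProduct_sub] at hN
  linarith [le_abs_self (h ⬝ᵥ (A *ᵥ x) - h ⬝ᵥ b)]

end Aggregation

lemma sum_intCast_div_eq_neg_dotProduct {ι : Type*} [Fintype ι] {h q y : ι → ℤ}
    (hT : ∑ i, ((h i : ℚ) + 1 / q i) * (y i : ℚ) = 0) :
    ∑ i, (y i : ℚ) / q i = ((-(h ⬝ᵥ y) : ℤ) : ℚ) := by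
  have : ∑ i, ((h i : ℚ) + 1 / q i) * (y i : ℚ) =
      ((h ⬝ᵥ y : ℤ) : ℚ) + ∑ i, (y i : ℚ) / q i := by
    simp only [dotProduct, Int.cast_sum, Int.cast_mul, ← sum_add_distrib]
    exact sum_congr rfl fun i _ => by ring
  push_cast
  linarith

theorem stmt_8_general (m n : ℕ) (hm : 0 < m)
    (A : Matrix (Fin m) (Fin n) ℤ) (b : Fin m → ℤ) (h : Fin m → ℤ)
    (hh : ∀ j : Fin n, (∑ i, |A i j|) + 1 ≤ ∑ i, h i * A i j)
    (M : ℤ)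
    (hM : M =
      (Finset.univ.sup' (Finset.univ_nonempty_iff.mpr ⟨⟨0, hm⟩⟩)
          fun i : Fin m => ∑ j, |A i j|) *
        ((Finset.univ.sup' (Finset.univ_nonempty_iff.mpr ⟨⟨0, hm⟩⟩)
          fun i : Fin m => |h i|) + 1) * (∑ i, |b i|) +
        Finset.univ.sup' (Finset.univ_nonempty_iff.mpr ⟨⟨0, hm⟩⟩)
          fun i : Fin m => |b i|)
    (q : Fin m → ℤ)
    (hqcop : ∀ i j, i ≠ j → Int.gcd (q i) (q j) = 1)
    (hqbig : ∀ i, M < q i) :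
    ∀ x : Fin n → ℤ, 0 ≤ x →
      (∑ i, ((h i : ℚ) + 1 / (q i : ℚ)) * ((A.mulVec x i - b i : ℤ) : ℚ)) = 0 →
      A.mulVec x = b := by
  intro x hx hT
  have hne : (univ : Finset (Fin m)).Nonempty := univ_nonempty_iff.mpr ⟨⟨0, hm⟩⟩
  have hsum := sum_intCast_div_eq_neg_dotProduct (y := A *ᵥ x - b) hT
  have hmass : ∑ j, x j ≤ (univ.sup' hne (fun i => |h i|) + 1) * ∑ i, |b i| := by
    refine sum_le_of_abs_dotProduct_mulVec_sub_le hh hx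
      (fun i => le_sup' (fun i => |h i|) (mem_univ i)) ?_
    have := abs_sum_intCast_div_le q (A *ᵥ x - b)
    rw [hsum, ← Int.cast_abs, abs_neg] at this
    exact_mod_cast this
  have hyM (k : Fin m) : |(A *ᵥ x - b) k| ≤ M := by
    have hAx := abs_mulVec_le hx k (le_sup' (fun i => ∑ j, |A i j|) (mem_univ k))
    have hα : 0 ≤ univ.sup' hne (fun i => ∑ j, |A i j|) :=
      (sum_nonneg fun j _ => abs_nonneg _).trans
        (le_sup' (fun i => ∑ j, |A i j|) (mem_univ k))
    have hb := le_sup' (fun i => |b i|) (mem_univ k)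
    rw [hM, mul_assoc]
    calc |(A *ᵥ x - b) k| ≤ |(A *ᵥ x) k| + |b k| := abs_sub _ _
      _ ≤ _ := add_le_add (hAx.trans (mul_le_mul_of_nonneg_left hmass hα)) hb
  have hcop : Pairwise fun i j => IsCoprime (q i) (q j) := fun i j hij =>
    Int.isCoprime_iff_gcd_eq_one.mpr (hqcop i j hij)
  exact sub_eq_zero.mp
    (eq_zero_of_sum_div_eq_intCast hcop (fun k => (hyM k).trans_lt (hqbig k)) hsum)

/-- Proposition `pointedaggregate`: with `hᵀA_j ≥ ‖A_j‖₁ + 1` for every column,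
`M = ‖A‖_∞·(‖h‖_∞ + 1)·‖b‖₁ + ‖b‖_∞`, and `q₁, …, q_m` pairwise coprime positive
integers all greater than `M`, the hyperplane `{y | (h + (1/q₁,…,1/q_m))ᵀ y = 0}`
avoids `-b + L⁺(A)`: for integer `x ≥ 0`, `T(Ax - b) = 0` implies `Ax = b`. -/
theorem stmt_8 (m n : ℕ) (hm : 0 < m)
    (A : Matrix (Fin m) (Fin n) ℤ) (b : Fin m → ℤ) (h : Fin m → ℤ)
    (hh : ∀ j : Fin n, (∑ i, |A i j|) + 1 ≤ ∑ i, h i * A i j)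
    (M : ℤ)
    (hM : M =
      (Finset.univ.sup' (Finset.univ_nonempty_iff.mpr ⟨⟨0, hm⟩⟩)
          fun i : Fin m => ∑ j, |A i j|) *
        ((Finset.univ.sup' (Finset.univ_nonempty_iff.mpr ⟨⟨0, hm⟩⟩)
          fun i : Fin m => |h i|) + 1) * (∑ i, |b i|) +
        Finset.univ.sup' (Finset.univ_nonempty_iff.mpr ⟨⟨0, hm⟩⟩)
          fun i : Fin m => |b i|)
    (q : Fin m → ℤ) (hqpos : ∀ i, 0 < q i)
    (hqcop : ∀ i j, i ≠ j → Int.gcd (q i) (q j) = 1)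
    (hqbig : ∀ i, M < q i) :
    ∀ x : Fin n → ℤ, 0 ≤ x →
      (∑ i, ((h i : ℚ) + 1 / (q i : ℚ)) * ((A.mulVec x i - b i : ℤ) : ℚ)) = 0 →
      A.mulVec x = b :=
  stmt_8_general m n hm A b h hh M hM q hqcop hqbig
end

section
/- Let A ∈ ℤ^{m×n} and b ∈ ℤ^m, and assume the cone C(A) = {Ax : x ∈ ℝ^n, x ≥ 0} is pointed. Then there exists a strong aggregation matrix T ∈ ℚ^{1×m} of size one for the system (F): {x ∈ ℤ^n : x ≥ 0, Ax = b} = {x ∈ ℤ^n : x ≥ 0, (TA)x = Tb}. -/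
/-!
Pointedness of `C(A)` means that `0` is not a convex combination of the nonzero columns of `A`,
so a separating hyperplane gives `w` with `w ⬝ᵥ a_j > 1` for every nonzero column `a_j`. For
every `t` near `w` the equation `t ⬝ᵥ A x = t ⬝ᵥ b` with `x ≥ 0` bounds the entries of `x` on
nonzero columns, so `A x` ranges over a finite set of values, independent of `t`. Choosing a
rational `t` near `w` off the finitely many hyperplanes `{t | t ⬝ᵥ (v - b) = 0}`, `v ≠ b` one of
these values, the single row `t` is a strong aggregation.
-/

open Matrix Finset

variable {m ι : Type*} [Fintype ι]

theorem exists_one_lt_dotProduct_of_zero_notMem_convexHull [Fintype m] {S : Set (m → ℝ)}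
    (hS : S.Finite) (h0 : (0 : m → ℝ) ∉ convexHull ℝ S) :
    ∃ w : m → ℝ, ∀ v ∈ S, 1 < w ⬝ᵥ v := by
  classical
  obtain ⟨f, u, hfu, hu⟩ := geometric_hahn_banach_closed_point (convex_convexHull ℝ S)
    (hS.isCompact_convexHull (𝕜 := ℝ)).isClosed h0
  rw [map_zero] at hu
  refine ⟨(dotProductEquiv ℝ m).symm (u⁻¹ • f.toLinearMap), fun v hv => ?_⟩
  have hfv : f v < u := hfu v (subset_convexHull ℝ S hv)
  have hw : (dotProductEquiv ℝ m).symm (u⁻¹ • f.toLinearMap) ⬝ᵥ v = u⁻¹ * f v := by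
    rw [← dotProductEquiv_apply_apply, LinearEquiv.apply_symm_apply]; rfl
  rwa [hw, ← div_eq_inv_mul, one_lt_div_of_neg hu]

theorem dense_setOf_dotProduct_ne_zero [Fintype m] {v : m → ℝ} (hv : v ≠ 0) :
    Dense {t : m → ℝ | v ⬝ᵥ t ≠ 0} := by
  classical
  change Dense (LinearMap.ker (dotProductEquiv ℝ m v) : Set (m → ℝ))ᶜ
  rw [← interior_eq_empty_iff_dense_compl, ← Set.not_nonempty_iff_eq_empty]
  intro hint
  have htop := (LinearMap.ker (dotProductEquiv ℝ m v)).eq_top_of_nonempty_interior' hint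
  exact hv (dotProduct_self_eq_zero.1 (LinearMap.congr_fun (LinearMap.ker_eq_top.1 htop) v))

theorem exists_rat_mem_forall_dotProduct_ne_zero [Fintype m] {U : Set (m → ℝ)} (hU : IsOpen U)
    (hne : U.Nonempty) {F : Finset (m → ℝ)} (hF : 0 ∉ F) :
    ∃ q : m → ℚ, (fun i => (q i : ℝ)) ∈ U ∧ ∀ v ∈ F, v ⬝ᵥ (fun i => (q i : ℝ)) ≠ 0 := by
  have hopen : ∀ v ∈ F, IsOpen {t : m → ℝ | v ⬝ᵥ t ≠ 0} := fun v _ =>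
    isOpen_ne_fun (by fun_prop) continuous_const
  have hdense : Dense (⋂ v ∈ F, {t : m → ℝ | v ⬝ᵥ t ≠ 0}) :=
    dense_biInter_of_isOpen hopen F.countable_toSet
      fun v hv => dense_setOf_dotProduct_ne_zero (ne_of_mem_of_not_mem hv hF)
  have hrat : DenseRange (Pi.map fun _ : m => ((↑) : ℚ → ℝ)) :=
    DenseRange.piMap fun _ => Rat.denseRange_cast
  obtain ⟨q, hqU, hqF⟩ := hrat.exists_mem_open (hU.inter (isOpen_biInter_finset hopen))
    (hdense.inter_open_nonempty U hU hne)
  exact ⟨q, hqU, Set.mem_iInter₂.1 hqF⟩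

theorem mulVec_eq_of_forall_col_ne_zero {R : Type*} [NonUnitalNonAssocSemiring R]
    (M : Matrix m ι R) {x y : ι → R} (h : ∀ j, M.col j ≠ 0 → x j = y j) : M *ᵥ x = M *ᵥ y := by
  ext i
  refine Finset.sum_congr rfl fun j _ => ?_
  by_cases hj : M.col j = 0
  · simp [show M i j = 0 from congrFun hj i]
  · rw [h j hj]

theorem le_dotProduct_mulVec_of_one_le_vecMul [Fintype m] {M : Matrix m ι ℝ} {t : m → ℝ}
    (ht : ∀ j, M.col j ≠ 0 → 1 ≤ (t ᵥ* M) j) {x : ι → ℝ} (hx : 0 ≤ x) {j : ι}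
    (hj : M.col j ≠ 0) : x j ≤ t ⬝ᵥ (M *ᵥ x) := by
  have hterm : ∀ k, 0 ≤ (t ᵥ* M) k * x k := fun k => by
    by_cases hk : M.col k = 0
    · simp [vecMul, show (fun i => M i k) = 0 from hk]
    · exact mul_nonneg (zero_le_one.trans (ht k hk)) (hx k)
  calc x j ≤ (t ᵥ* M) j * x j := le_mul_of_one_le_left (hx j) (ht j hj)
    _ ≤ ∑ k, (t ᵥ* M) k * x k := Finset.single_le_sum (fun k _ => hterm k) (Finset.mem_univ j)
    _ = t ⬝ᵥ (M *ᵥ x) := by rw [dotProduct_mulVec, dotProduct]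

theorem exists_mem_Icc_mulVec_eq_of_dotProduct_lt [Fintype m] [DecidableEq ι]
    {M : Matrix m ι ℝ} {t : m → ℝ} (ht : ∀ j, M.col j ≠ 0 → 1 ≤ (t ᵥ* M) j) {N : ℕ}
    {x : ι → ℤ} (hx : 0 ≤ x) (hxN : t ⬝ᵥ (M *ᵥ fun j => (x j : ℝ)) < N) :
    ∃ y ∈ Icc 0 fun _ => (N : ℤ), (M *ᵥ fun j => (y j : ℝ)) = M *ᵥ fun j => (x j : ℝ) := by
  classical
  refine ⟨fun j => if M.col j = 0 then 0 else x j, mem_Icc.2 ⟨fun j => ?_, fun j => ?_⟩,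
    mulVec_eq_of_forall_col_ne_zero M fun j hj => by simp [hj]⟩
  · dsimp only
    split_ifs
    exacts [le_rfl, hx j]
  · dsimp only
    split_ifs with hj
    · exact Int.natCast_nonneg N
    · have := le_dotProduct_mulVec_of_one_le_vecMul ht (fun j => Int.cast_nonneg (hx j)) hj
      exact_mod_cast (this.trans_lt hxN).le

def IsPointedColumnCone (M : Matrix m ι ℝ) : Prop :=
  ∀ v : m → ℝ, (∃ x : ι → ℝ, 0 ≤ x ∧ v = M *ᵥ x) → (∃ x : ι → ℝ, 0 ≤ x ∧ -v = M *ᵥ x) → v = 0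

namespace IsPointedColumnCone

variable {M : Matrix m ι ℝ} (hM : IsPointedColumnCone M)
include hM

theorem smul_col_eq_zero [DecidableEq ι] {x : ι → ℝ} (hx : 0 ≤ x) (hMx : M *ᵥ x = 0) (j : ι) :
    x j • M.col j = 0 := by
  have hsingle : M *ᵥ Pi.single j (x j) = x j • M.col j := by
    ext i; simp [mul_comm]
  refine hM _ ⟨Pi.single j (x j), Pi.single_nonneg.2 (hx j), hsingle.symm⟩
    ⟨x - Pi.single j (x j), fun k => ?_, by rw [mulVec_sub, hMx, hsingle, zero_sub]⟩
  rcases eq_or_ne k j with rfl | hk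
  · simp
  · simpa [hk] using hx k

theorem zero_notMem_convexHull [Fintype m] :
    (0 : m → ℝ) ∉ convexHull ℝ (Set.range M.col \ {0}) := by
  classical
  intro h0
  obtain ⟨κ, _, w, z, hw0, hw1, hz, hsum⟩ := mem_convexHull_iff_exists_fintype.1 h0
  choose g hg using fun k => (hz k).1
  set x : ι → ℝ := ∑ k, Pi.single (g k) (w k)
  have hx : 0 ≤ x := Finset.sum_nonneg fun k _ => Pi.single_nonneg.2 (hw0 k)
  have hMx : M *ᵥ x = 0 := by
    simp only [x, mulVec_sum, ← hsum]
    refine Finset.sum_congr rfl fun k _ => ?_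
    ext i; simp [hg, mul_comm]
  obtain ⟨k, -, hk⟩ := Finset.exists_ne_zero_of_sum_ne_zero (hw1.symm ▸ one_ne_zero)
  have hxk : w k ≤ x (g k) := by
    simpa [x] using Finset.single_le_sum (f := fun l => (Pi.single (g l) (w l) : ι → ℝ) (g k))
      (fun l _ => (Pi.single_nonneg.2 (hw0 l) : (0 : ι → ℝ) ≤ _) (g k)) (Finset.mem_univ k)
  have := hM.smul_col_eq_zero hx hMx (g k)
  rw [smul_eq_zero, hg] at this
  exact this.elim (fun h => hk (by linarith [hw0 k])) (hz k).2

theorem exists_one_lt_vecMul [Fintype m] : ∃ w : m → ℝ, ∀ j, M.col j ≠ 0 → 1 < (w ᵥ* M) j := by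
  obtain ⟨w, hw⟩ := exists_one_lt_dotProduct_of_zero_notMem_convexHull
    (Set.finite_range _).sdiff hM.zero_notMem_convexHull
  exact ⟨w, fun j hj => hw _ ⟨⟨j, rfl⟩, hj⟩⟩

theorem exists_rat_dotProduct_eq_imp_mulVec_eq [Fintype m] (b : m → ℝ) :
    ∃ q : m → ℚ, ∀ x : ι → ℤ, 0 ≤ x →
      (fun i => (q i : ℝ)) ⬝ᵥ (M *ᵥ fun j => (x j : ℝ)) = (fun i => (q i : ℝ)) ⬝ᵥ b →
        (M *ᵥ fun j => (x j : ℝ)) = b := by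
  classical
  obtain ⟨w, hw⟩ := hM.exists_one_lt_vecMul
  obtain ⟨N, hN⟩ := exists_nat_gt (w ⬝ᵥ b)
  set U : Set (m → ℝ) := {t | (∀ j, M.col j ≠ 0 → 1 < (t ᵥ* M) j) ∧ t ⬝ᵥ b < N}
  have hU : IsOpen U := by
    simp only [U, Set.ofPred_and, Set.ofPred_forall]
    refine (isOpen_iInter_of_finite fun j => isOpen_iInter_of_finite fun _ =>
      isOpen_lt continuous_const ?_).inter (isOpen_lt ?_ continuous_const) <;> fun_prop
  set F := (Icc 0 fun _ => (N : ℤ)).image fun y : ι → ℤ => (M *ᵥ fun j => (y j : ℝ)) - b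
  obtain ⟨q, ⟨hqM, hqN⟩, hqF⟩ :=
    exists_rat_mem_forall_dotProduct_ne_zero hU ⟨w, hw, hN⟩ (F.notMem_erase 0)
  refine ⟨q, fun x hx hxq => ?_⟩
  obtain ⟨y, hy, hyx⟩ :=
    exists_mem_Icc_mulVec_eq_of_dotProduct_lt (fun j hj => (hqM j hj).le) hx (hxq ▸ hqN)
  by_contra hne
  refine hqF _ (mem_erase.2 ⟨?_, mem_image.2 ⟨y, hy, rfl⟩⟩) ?_
  · rwa [hyx, sub_ne_zero]
  · rw [hyx, sub_dotProduct, dotProduct_comm, hxq, dotProduct_comm, sub_self]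

end IsPointedColumnCone

theorem mulVec_of_const_eq_iff [Fintype m] {R o : Type*} [CommSemiring R] [Nonempty o]
    (q u v : m → R) : (of fun _ : o => q) *ᵥ u = (of fun _ : o => q) *ᵥ v ↔ q ⬝ᵥ u = q ⬝ᵥ v :=
  ⟨fun h => congrFun h (Classical.arbitrary o), fun h => funext fun _ => h⟩

/-- Proposition `onerowpointed` (existence part): if the cone
`C(A) = {Ax : x ≥ 0}` is pointed, then there exists a strong aggregation
matrix `T ∈ ℚ^{1×m}` of size one for the system `(F)`. -/
theorem stmt_9 (m n : ℕ) (A : Matrix (Fin m) (Fin n) ℤ) (b : Fin m → ℤ)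
    (hpointed : ∀ v : Fin m → ℝ,
      (∃ x : Fin n → ℝ, 0 ≤ x ∧ v = (A.map (Int.cast : ℤ → ℝ)).mulVec x) →
      (∃ x : Fin n → ℝ, 0 ≤ x ∧ -v = (A.map (Int.cast : ℤ → ℝ)).mulVec x) →
      v = 0) :
    ∃ T : Matrix (Fin 1) (Fin m) ℚ,
      {x : Fin n → ℤ | 0 ≤ x ∧ A.mulVec x = b} =
        {x : Fin n → ℤ | 0 ≤ x ∧
          (T * A.map (Int.cast : ℤ → ℚ)).mulVec (fun j => (x j : ℚ)) =
            T.mulVec (fun i => (b i : ℚ))} := by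
  obtain ⟨q, hq⟩ :=
    IsPointedColumnCone.exists_rat_dotProduct_eq_imp_mulVec_eq hpointed fun i => (b i : ℝ)
  refine ⟨of fun _ => q, Set.ext fun x => and_congr_right fun hx => ?_⟩
  have hA : ∀ (R : Type) [Ring R], (A.map (Int.cast : ℤ → R) *ᵥ fun j => (x j : R)) =
      fun i => ((A *ᵥ x) i : R) :=
    fun R _ => funext fun i => ((Int.castRingHom R).map_mulVec A x i).symm
  rw [← mulVec_mulVec, mulVec_of_const_eq_iff, hA]
  refine ⟨fun h => h ▸ rfl, fun h => (Int.cast_injective (α := ℝ)).comp_left ?_⟩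
  change (fun i => ((A *ᵥ x) i : ℝ)) = fun i => (b i : ℝ)
  rw [← hA]
  refine hq x hx ?_
  simpa only [hA, RingHom.map_dotProduct, Function.comp_def, Rat.coe_castHom, Rat.cast_intCast]
    using congrArg (Rat.castHom ℝ) h
end

section
/- Let A ∈ ℤ^{m×n}, let R = C(A) ∩ (−C(A)) be the lineality space of the cone C(A) with r = dim R, and assume C(A) ≠ R. Let H ⊆ ℝ^m be a linear subspace spanned by rational vectors with dim H ≥ m − r. Then there exists a nonzero vector ỹ ∈ ℚ^m with ỹ ∈ H ∩ C(A). -/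
/-!
The lineality space `R` of `C(A)` is spanned by the columns `aⱼ` with `-aⱼ ∈ C(A)`, so `R` and `H`
are both spanned by rational vectors, and their `ℚ`-spans `R_ℚ`, `H_ℚ ⊆ ℚ^m` have `ℚ`-dimensions at
least `dim R` and `dim H`, which add up to at least `m`. Either `H_ℚ ∩ R_ℚ` contains a nonzero
vector, which lies in `H ∩ R ⊆ H ∩ C(A)`, or `ℚ^m = H_ℚ ⊕ R_ℚ`. In the latter case write a column
`a ∉ R` as `h + ρ`: then `h = a - ρ ∈ H ∩ C(A)` because `-ρ ∈ R ⊆ C(A)`, and `h ≠ 0` as `a ∉ R`.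
-/

open Module Submodule Matrix

theorem Submodule.finrank_span_le_finrank_span_of_tower (K : Type*) {L W : Type*} [Field K]
    [Field L] [Algebra K L] [AddCommGroup W] [Module K W] [Module L W] [IsScalarTower K L W]
    (s : Set W) [Module.Finite K (span K s)] :
    finrank L (span L s) ≤ finrank K (span K s) := by
  obtain ⟨f, -, hf, -⟩ := exists_fun_fin_finrank_span_eq K s
  calc finrank L (span L s) = finrank L (span L (Set.range f)) := by
        rw [← span_span_of_tower K L (Set.range f), hf, span_span_of_tower]
    _ ≤ finrank K (span K s) := (finrank_range_le_card f).trans_eq (Fintype.card_fin _)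

theorem Submodule.inf_ne_bot_or_sup_eq_of_finrank_le {K V : Type*} [DivisionRing K]
    [AddCommGroup V] [Module K V] {P Q U : Submodule K V} [FiniteDimensional K U]
    (hP : P ≤ U) (hQ : Q ≤ U) (hdim : finrank K U ≤ finrank K P + finrank K Q) :
    P ⊓ Q ≠ ⊥ ∨ P ⊔ Q = U := by
  refine or_iff_not_imp_left.2 fun hPQ => ?_
  have := Submodule.finiteDimensional_of_le hP
  have := Submodule.finiteDimensional_of_le hQ
  refine Submodule.eq_of_le_of_finrank_le (sup_le hP hQ) ?_
  have := Submodule.finrank_sup_add_finrank_inf_eq P Q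
  rw [not_not.1 hPQ, finrank_bot] at this
  omega

section RationalVectors

variable (K L ι : Type*) [Field K] [Field L] [Algebra K L]

def rationalVectors : Submodule K (ι → L) :=
  LinearMap.range ((Algebra.linearMap K L).compLeft ι)

variable {K L ι}

theorem mem_rationalVectors_iff {v : ι → L} :
    v ∈ rationalVectors K L ι ↔ ∀ i, ∃ q : K, v i = algebraMap K L q := by
  simp [rationalVectors, funext_iff, Classical.skolem, eq_comm]

theorem mem_rationalVectors_rat_iff [CharZero L] {v : ι → L} :
    v ∈ rationalVectors ℚ L ι ↔ ∀ i, ∃ q : ℚ, v i = q := by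
  simp [mem_rationalVectors_iff]

theorem finrank_rationalVectors [Fintype ι] :
    finrank K (rationalVectors K L ι) = Fintype.card ι := by
  rw [rationalVectors, LinearMap.finrank_range_of_inj, finrank_fintype_fun_eq_card]
  exact (algebraMap K L).injective.comp_left

instance [Finite ι] : FiniteDimensional K (rationalVectors K L ι) := by
  unfold rationalVectors; infer_instance

theorem exists_ne_zero_rational_mem_span_inter_of_card_le [Fintype ι] {C : Set (ι → L)}
    (hC : ∀ u ∈ C, ∀ v ∈ C, u + v ∈ C) {s t : Set (ι → L)}
    (hs : s ⊆ rationalVectors K L ι) (ht : t ⊆ rationalVectors K L ι)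
    (htC : (span L t : Set (ι → L)) ⊆ C) {a : ι → L} (ha : a ∈ rationalVectors K L ι)
    (haC : a ∈ C) (hat : a ∉ span L t)
    (hdim : Fintype.card ι ≤ finrank L (span L s) + finrank L (span L t)) :
    ∃ y ∈ rationalVectors K L ι, y ≠ 0 ∧ y ∈ span L s ∧ y ∈ C := by
  have hsV : span K s ≤ rationalVectors K L ι := span_le.2 hs
  have htV : span K t ≤ rationalVectors K L ι := span_le.2 ht
  have := Submodule.finiteDimensional_of_le hsV
  have := Submodule.finiteDimensional_of_le htV
  have hdimK :
      finrank K (rationalVectors K L ι) ≤ finrank K (span K s) + finrank K (span K t) := by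
    have := finrank_span_le_finrank_span_of_tower K (L := L) s
    have := finrank_span_le_finrank_span_of_tower K (L := L) t
    rw [finrank_rationalVectors]
    omega
  rcases inf_ne_bot_or_sup_eq_of_finrank_le hsV htV hdimK with hinf | hsup
  · obtain ⟨y, ⟨hys, hyt⟩, hy0⟩ := (Submodule.ne_bot_iff _).1 hinf
    exact ⟨y, hsV hys, hy0, span_le_restrictScalars K L s hys,
      htC (span_le_restrictScalars K L t hyt)⟩
  · obtain ⟨h, hh, ρ, hρ, rfl⟩ := mem_sup.1 (hsup ▸ ha)
    have hρ' : ρ ∈ span L t := span_le_restrictScalars K L t hρ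
    refine ⟨h, hsV hh, ?_, span_le_restrictScalars K L s hh, ?_⟩
    · rintro rfl
      exact hat (by simpa using hρ')
    · simpa using hC _ haC _ (htC (neg_mem hρ'))

end RationalVectors

namespace Matrix

theorem mulVec_eq_sum_smul_col {R m n : Type*} [CommSemiring R] [Fintype n] (M : Matrix m n R)
    (x : n → R) : M *ᵥ x = ∑ j, x j • Mᵀ j := by
  simp [mulVec_eq_sum]

variable {𝕜 m n : Type*} [Field 𝕜] [LinearOrder 𝕜] [Fintype n] (M : Matrix m n 𝕜)

def colCone : Set (m → 𝕜) := {v | ∃ x, 0 ≤ x ∧ v = M *ᵥ x}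

theorem colCone_subset_of_forall_col_mem {p : Submodule 𝕜 (m → 𝕜)} (h : ∀ j, Mᵀ j ∈ p) :
    M.colCone ⊆ p := by
  rintro _ ⟨x, -, rfl⟩
  rw [mulVec_eq_sum_smul_col]
  exact sum_mem fun j _ => smul_mem p _ (h j)

variable [IsStrictOrderedRing 𝕜]

theorem col_mem_colCone (j : n) : Mᵀ j ∈ M.colCone := by
  classical
  exact ⟨Pi.single j 1, Pi.single_nonneg.2 zero_le_one, by simp [mulVec_single, col]⟩

theorem add_mem_colCone {u v : m → 𝕜} (hu : u ∈ M.colCone) (hv : v ∈ M.colCone) :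
    u + v ∈ M.colCone := by
  obtain ⟨x, hx, rfl⟩ := hu
  obtain ⟨y, hy, rfl⟩ := hv
  exact ⟨x + y, add_nonneg hx hy, (mulVec_add M x y).symm⟩

theorem neg_col_mem_colCone {x y : n → 𝕜} (hx : 0 ≤ x) (hy : 0 ≤ y)
    (hxy : -(M *ᵥ x) = M *ᵥ y) {j : n} (hj : 0 < x j) : -Mᵀ j ∈ M.colCone := by
  classical
  -- `M *ᵥ (y + x) = 0`, so removing the `j`-th term leaves `-(x j) • Mᵀ j`
  refine ⟨(x j)⁻¹ • (y + x - Pi.single j (x j)), ?_, ?_⟩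
  · refine smul_nonneg (inv_nonneg.2 hj.le) (sub_nonneg.2 (le_add_of_nonneg_of_le hy fun i => ?_))
    rcases eq_or_ne i j with rfl | hij
    · simp
    · simpa [hij] using hx i
  · have hsingle : M *ᵥ Pi.single j (x j) = x j • Mᵀ j := by
      ext i; simp [mulVec_single, mul_comm]
    rw [mulVec_smul, mulVec_sub, mulVec_add, ← hxy, hsingle, neg_add_cancel, zero_sub, smul_neg,
      smul_smul, inv_mul_cancel₀ hj.ne', one_smul]

theorem lineality_subset_span :
    {v | v ∈ M.colCone ∧ -v ∈ M.colCone} ⊆ span 𝕜 (Mᵀ '' {j | -Mᵀ j ∈ M.colCone}) := by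
  rintro _ ⟨⟨x, hx, rfl⟩, y, hy, hxy⟩
  rw [mulVec_eq_sum_smul_col]
  refine sum_mem fun j _ => ?_
  rcases (hx j).eq_or_lt with hj | hj
  · simp [← hj]
  · exact smul_mem _ _ (subset_span ⟨j, M.neg_col_mem_colCone hx hy hxy hj, rfl⟩)

end Matrix

/-- The Claim inside Lemma `LB`: if `H` is a rational subspace of dimension at
least `m - r` where `r = dim R`, `R = C(A) ∩ (-C(A))` being the lineality space
of the cone `C(A) ≠ R`, then `H ∩ C(A)` contains a nonzero rational vector. -/
theorem stmt_10 (m n : ℕ) (A : Matrix (Fin m) (Fin n) ℤ)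
    (C : Set (Fin m → ℝ))
    (hC : C = {v | ∃ x : Fin n → ℝ, 0 ≤ x ∧ v = (A.map (Int.cast : ℤ → ℝ)).mulVec x})
    (R : Submodule ℝ (Fin m → ℝ))
    (hR : (R : Set (Fin m → ℝ)) = {v | v ∈ C ∧ -v ∈ C})
    (hCR : C ≠ (R : Set (Fin m → ℝ)))
    (H : Submodule ℝ (Fin m → ℝ))
    (hHrat : ∃ s : Set (Fin m → ℝ),
      (∀ v ∈ s, ∀ i, ∃ qv : ℚ, v i = (qv : ℝ)) ∧ H = Submodule.span ℝ s)
    (hdim : m - Module.finrank ℝ R ≤ Module.finrank ℝ H) :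
    ∃ y : Fin m → ℝ, y ≠ 0 ∧ (∀ i, ∃ qv : ℚ, y i = (qv : ℝ)) ∧ y ∈ H ∧ y ∈ C := by
  set M := A.map (Int.cast : ℤ → ℝ)
  obtain rfl : C = M.colCone := hC
  obtain ⟨s, hs, rfl⟩ := hHrat
  have hRC : (R : Set (Fin m → ℝ)) ⊆ M.colCone := hR ▸ fun v hv => hv.1
  have hR_eq : R = span ℝ (Mᵀ '' {j | -Mᵀ j ∈ M.colCone}) := by
    refine le_antisymm (fun v hv => M.lineality_subset_span (by rwa [← hR])) (span_le.2 ?_)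
    rintro _ ⟨j, hj, rfl⟩
    rw [hR]
    exact ⟨M.col_mem_colCone j, hj⟩
  have hcol : ∀ j, Mᵀ j ∈ rationalVectors ℚ ℝ (Fin m) := fun j =>
    mem_rationalVectors_rat_iff.2 fun i => ⟨A i j, by simp [M]⟩
  obtain ⟨j, hj⟩ : ∃ j, Mᵀ j ∉ R := by
    by_contra! h
    exact hCR ((M.colCone_subset_of_forall_col_mem h).antisymm hRC)
  have hRm : finrank ℝ R ≤ m := by simpa using R.finrank_le
  obtain ⟨y, hy, hy0, hyH, hyC⟩ := exists_ne_zero_rational_mem_span_inter_of_card_le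
    (fun u hu v hv => M.add_mem_colCone hu hv)
    (fun v hv => mem_rationalVectors_rat_iff.2 (hs v hv))
    (Set.image_subset_iff.2 fun j _ => hcol j) (hR_eq ▸ hRC) (hcol j) (M.col_mem_colCone j)
    (hR_eq ▸ hj) (by rw [← hR_eq, Fintype.card_fin]; omega)
  exact ⟨y, hy0, mem_rationalVectors_rat_iff.1 hy, hyH, hyC⟩
end

section
/- Let A ∈ ℤ^{m×n} and b ∈ ℤ^m. Let R = C(A) ∩ (−C(A)) be the lineality space of C(A), r = dim R, and assume C(A) ≠ R. Let T ∈ ℚ^{k×m} with k ≤ r. If the system (F) has a solution x* (i.e. x* ∈ ℤ^n, x* ≥ 0, Ax* = b), then there exists x_T ∈ ℤ^n with x_T ≥ 0, (TA)x_T = Tb and Ax_T ≠ b; in particular T is not a strong aggregation matrix for (F). -/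
open Matrix Module Topology

/-!
Since `dim R ≥ k`, the map `T` either kills a nonzero vector of `R ⊆ C(A)`, or maps `R` onto
`ℝᵏ`; in the latter case any `w ∈ C(A) \ R` can be shifted by some `u ∈ R` with `T u = T w`,
and `w - u ∈ C(A)` because `-u ∈ R ⊆ C(A)`. Either way some `x ≥ 0` has `T A x = 0 ≠ A x`.
The rational solutions of a rational linear system are dense in its real solutions, so `x` can
be taken rational with the same sign pattern, and then integral after clearing denominators.
Adding it to `x*` gives a solution of the aggregated system that does not solve `A x = b`.
-/

theorem exists_mem_ne_zero_map_eq_zero_of_finrank_le {K E F : Type*} [Field K]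
    [AddCommGroup E] [Module K E] [AddCommGroup F] [Module K F] [FiniteDimensional K F]
    (C : AddSubsemigroup E) (R : Submodule K E) (hRC : (R : Set E) ⊆ C)
    (hCR : ¬ (C : Set E) ⊆ R) (f : E →ₗ[K] F) (hk : finrank K F ≤ finrank K R) :
    ∃ v ∈ C, v ≠ 0 ∧ f v = 0 := by
  by_cases hinj : Function.Injective (f ∘ₗ R.subtype)
  · obtain ⟨w, hwC, hwR⟩ := Set.not_subset.1 hCR
    have hsurj : LinearMap.range (f ∘ₗ R.subtype) = ⊤ :=
      Submodule.eq_top_of_finrank_eq ((Submodule.finrank_le _).antisymm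
        (LinearMap.finrank_range_of_inj hinj ▸ hk))
    obtain ⟨u, hu⟩ : f w ∈ LinearMap.range (f ∘ₗ R.subtype) := hsurj ▸ Submodule.mem_top
    refine ⟨w + -u, C.add_mem hwC (hRC (R.neg_mem u.2)), fun h => hwR ?_, ?_⟩
    · rw [add_neg_eq_zero.1 h]
      exact u.2
    · simp [← hu]
  · obtain ⟨u, hu, hu0⟩ := Submodule.exists_mem_ne_zero_of_ne_bot (mt LinearMap.ker_eq_bot.1 hinj)
    exact ⟨u, hRC u.2, by simpa using hu0, hu⟩

theorem exists_pos_nat_smul_eq_intCast {ι : Type*} [Fintype ι] (y : ι → ℚ) :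
    ∃ c : ℕ, 0 < c ∧ ∃ z : ι → ℤ, Int.cast ∘ z = c • y := by
  classical
  refine ⟨∏ j, (y j).den, Finset.prod_pos fun j _ => (y j).den_pos,
    fun j => (y j).num * ∏ i ∈ Finset.univ.erase j, ((y i).den : ℤ), funext fun j => ?_⟩
  simp only [Function.comp_apply, Pi.smul_apply, nsmul_eq_mul, Int.cast_mul, Int.cast_prod,
    Int.cast_natCast, Nat.cast_prod]
  rw [← Finset.mul_prod_erase Finset.univ (fun i => ((y i).den : ℚ)) (Finset.mem_univ j),
    ← Rat.mul_den_eq_num]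
  ring

namespace Matrix

theorem rank_le_rank_map_algebraMap {K L m n : Type*} [Field K] [Field L] [Algebra K L]
    [Finite m] [Fintype n] (M : Matrix m n K) :
    M.rank ≤ (M.map (algebraMap K L)).rank := by
  obtain ⟨s, hs_cols, hs_span, hs_li⟩ := exists_linearIndependent K (Set.range M.col)
  have : Fintype s := ((Set.finite_range _).subset hs_cols).fintype
  have hs_li' : LinearIndependent L fun c : s => algebraMap K L ∘ (c : m → K) :=
    linearIndependent_algebraMap_comp_iff.2 hs_li
  rw [rank_eq_finrank_span_cols, rank_eq_finrank_span_cols, ← hs_span,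
    ← Subtype.range_coe (s := s), finrank_span_eq_card hs_li, ← finrank_span_eq_card hs_li']
  refine Submodule.finrank_mono (Submodule.span_le.2 ?_)
  rintro _ ⟨⟨c, hc⟩, rfl⟩
  obtain ⟨j, rfl⟩ := hs_cols hc
  exact Submodule.subset_span ⟨j, rfl⟩

theorem finrank_ker_map_algebraMap_le {K L m n : Type*} [Field K] [Field L]
    [Algebra K L] [Finite m] [Fintype n] (M : Matrix m n K) :
    finrank L (LinearMap.ker (M.map (algebraMap K L)).mulVecLin) ≤
      finrank K (LinearMap.ker M.mulVecLin) := by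
  have hK := LinearMap.finrank_range_add_finrank_ker M.mulVecLin
  have hL := LinearMap.finrank_range_add_finrank_ker (M.map (algebraMap K L)).mulVecLin
  have hrank := M.rank_le_rank_map_algebraMap (L := L)
  rw [finrank_fintype_fun_eq_card] at hK hL
  rw [rank, rank] at hrank
  omega

theorem map_mulVec_comp {R S m n : Type*} [NonAssocSemiring R] [NonAssocSemiring S]
    [Fintype n] (f : R →+* S) (M : Matrix m n R) (v : n → R) :
    M.map f *ᵥ (f ∘ v) = f ∘ (M *ᵥ v) :=
  funext fun i => (f.map_mulVec M v i).symm

theorem mem_closure_ratCast_ker {m n : Type*} [Fintype m] [Fintype n]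
    (M : Matrix m n ℚ) {x : n → ℝ} (hx : M.map (↑) *ᵥ x = 0) :
    x ∈ closure ((fun y j => (y j : ℝ)) '' {y : n → ℚ | M *ᵥ y = 0}) := by
  set K := LinearMap.ker M.mulVecLin
  let b := Module.finBasis ℚ K
  let w i : n → ℝ := (↑) ∘ (b i : n → ℚ)
  have hw_li : LinearIndependent ℝ w :=
    linearIndependent_algebraMap_comp_iff.2 (b.linearIndependent.map' K.subtype K.ker_subtype)
  have hw_ker i : w i ∈ LinearMap.ker (M.map (↑)).mulVecLin := by
    have hb : M *ᵥ (b i : n → ℚ) = 0 := (b i).2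
    change M.map (Rat.castHom ℝ) *ᵥ (Rat.castHom ℝ ∘ (b i : n → ℚ)) = 0
    rw [map_mulVec_comp, hb]
    funext; simp
  have hspan : Submodule.span ℝ (Set.range w) = LinearMap.ker (M.map (↑)).mulVecLin := by
    refine Submodule.eq_of_le_of_finrank_le
      (Submodule.span_le.2 (Set.range_subset_iff.2 hw_ker)) ?_
    rw [finrank_span_eq_card hw_li, Fintype.card_fin]
    exact M.finrank_ker_map_algebraMap_le
  have hxw : x ∈ Submodule.span ℝ (Set.range w) := hspan ▸ hx
  obtain ⟨c, rfl⟩ := Submodule.mem_span_range_iff_exists_fun ℝ |>.1 hxw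
  have hφ : Continuous fun c : Fin (finrank ℚ K) → ℝ => ∑ i, c i • w i := by fun_prop
  have hdense : DenseRange fun (q : Fin (finrank ℚ K) → ℚ) i => (q i : ℝ) :=
    DenseRange.piMap fun _ => Rat.denseRange_cast
  refine closure_mono ?_
    (mem_closure_image (f := fun c => ∑ i, c i • w i) hφ.continuousAt (hdense c))
  rintro _ ⟨_, ⟨q, rfl⟩, rfl⟩
  refine ⟨∑ i, q i • (b i : n → ℚ), ?_, ?_⟩
  · exact K.sum_mem fun i _ => K.smul_mem _ (b i).2
  · funext j; simp [w]

theorem exists_nonneg_rat_of_nonneg_real {m m' n : Type*} [Fintype m] [Fintype m'] [Fintype n]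
    (P : Matrix m n ℚ) (Q : Matrix m' n ℚ) {x : n → ℝ} (hx : 0 ≤ x)
    (hP : P.map (↑) *ᵥ x = 0) (hQ : Q.map (↑) *ᵥ x ≠ 0) :
    ∃ y : n → ℚ, 0 ≤ y ∧ P *ᵥ y = 0 ∧ Q *ᵥ y ≠ 0 := by
  classical
  -- the rows of `D` pin down the zero pattern of `x`, so nearby kernel vectors stay nonnegative
  let D : Matrix n n ℚ := diagonal fun j => if x j = 0 then 1 else 0
  have hD : (fromRows P D).map (↑) *ᵥ x = 0 := by
    rw [fromRows_map, fromRows_mulVec, hP, diagonal_map Rat.cast_zero]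
    ext (i | j)
    · simp
    · by_cases hj : x j = 0 <;> simp [hj, mulVec_diagonal]
  have hnear : ∀ᶠ z in 𝓝 x, Q.map (↑) *ᵥ z ≠ 0 ∧ ∀ j, x j ≠ 0 → 0 < z j := by
    have hpos (j : n) : ∀ᶠ z in 𝓝 x, x j ≠ 0 → 0 < z j := by
      by_cases hj : x j = 0
      · simp [hj]
      · exact ((continuous_apply j).continuousAt.eventually
          (lt_mem_nhds ((hx j).lt_of_ne' hj))).mono fun _ h _ => h
    have hQcont : Continuous fun z : n → ℝ => Q.map (↑) *ᵥ z :=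
      continuous_const.matrix_mulVec continuous_id
    exact (hQcont.continuousAt.eventually_ne hQ).and (Filter.eventually_all.2 hpos)
  obtain ⟨_, ⟨y, hy, rfl⟩, hQy, hpos⟩ :=
    ((mem_closure_iff_frequently.1 (mem_closure_ratCast_ker _ hD)).and_eventually hnear).exists
  rw [Set.mem_ofPred_eq, fromRows_mulVec, ← Sum.elim_zero_zero, Sum.elim_eq_iff] at hy
  refine ⟨y, fun j => ?_, hy.1, fun hQ0 => hQy ?_⟩
  · by_cases hj : x j = 0
    · simpa [hj, mulVec_diagonal, D] using (congr_fun hy.2 j).ge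
    · exact Rat.cast_nonneg.1 (hpos j hj).le
  · change Q.map (Rat.castHom ℝ) *ᵥ (Rat.castHom ℝ ∘ y) = 0
    rw [map_mulVec_comp, hQ0]
    funext; simp

theorem exists_nonneg_int_of_nonneg_real {m m' n : Type*} [Fintype m] [Fintype m'] [Fintype n]
    (P : Matrix m n ℚ) (Q : Matrix m' n ℚ) {x : n → ℝ} (hx : 0 ≤ x)
    (hP : P.map (↑) *ᵥ x = 0) (hQ : Q.map (↑) *ᵥ x ≠ 0) :
    ∃ z : n → ℤ, 0 ≤ z ∧ P *ᵥ (Int.cast ∘ z) = 0 ∧ Q *ᵥ (Int.cast ∘ z) ≠ 0 := by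
  obtain ⟨y, hy, hPy, hQy⟩ := exists_nonneg_rat_of_nonneg_real P Q hx hP hQ
  obtain ⟨c, hc, z, hz⟩ := exists_pos_nat_smul_eq_intCast y
  refine ⟨z, fun j => ?_, by rw [hz, mulVec_smul, hPy, smul_zero], ?_⟩
  · have hzj : (z j : ℚ) = c • y j := congr_fun hz j
    exact Int.cast_nonneg_iff.1 (hzj ▸ smul_nonneg (Nat.zero_le c) (hy j))
  · rw [hz, mulVec_smul]
    exact smul_ne_zero hc.ne' hQy

end Matrix

/-- Lemma `LB`: if `k ≤ r = dim(C(A) ∩ (-C(A)))`, `C(A) ≠ R`, and `(F)` has a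
solution `x*`, then for any `T ∈ ℚ^{k×m}` there is a solution `x_T` of the
aggregated system `(F_T)` which is not a solution of `(F)`; in particular `T`
is not a strong aggregation matrix. -/
theorem stmt_11 (m n k : ℕ) (A : Matrix (Fin m) (Fin n) ℤ) (b : Fin m → ℤ)
    (C : Set (Fin m → ℝ))
    (hC : C = {v | ∃ x : Fin n → ℝ, 0 ≤ x ∧ v = (A.map (Int.cast : ℤ → ℝ)).mulVec x})
    (R : Submodule ℝ (Fin m → ℝ))
    (hR : (R : Set (Fin m → ℝ)) = {v | v ∈ C ∧ -v ∈ C})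
    (hCR : C ≠ (R : Set (Fin m → ℝ)))
    (hk : k ≤ Module.finrank ℝ R)
    (T : Matrix (Fin k) (Fin m) ℚ)
    (xstar : Fin n → ℤ) (hxstar : 0 ≤ xstar ∧ A.mulVec xstar = b) :
    ∃ xT : Fin n → ℤ, 0 ≤ xT ∧
      (T * A.map (Int.cast : ℤ → ℚ)).mulVec (fun j => (xT j : ℚ)) =
        T.mulVec (fun i => (b i : ℚ)) ∧
      A.mulVec xT ≠ b := by
  set Aq := A.map (Int.cast : ℤ → ℚ)
  have hAq : Aq.map (↑) = A.map (Int.cast : ℤ → ℝ) := by ext; simp [Aq]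
  have hAq_mulVec (w : Fin n → ℤ) : Aq *ᵥ (Int.cast ∘ w) = Int.cast ∘ (A *ᵥ w) :=
    map_mulVec_comp (Int.castRingHom ℚ) A w
  have hTA : (T * Aq).map (Rat.cast : ℚ → ℝ) =
      T.map (Rat.cast : ℚ → ℝ) * A.map (Int.cast : ℤ → ℝ) :=
    hAq ▸ Matrix.map_mul (L := T) (M := Aq) (f := Rat.castHom ℝ)
  have hRC : (R : Set (Fin m → ℝ)) ⊆ C := by rw [hR]; exact fun v hv => hv.1
  have hcone :
      C = (PointedCone.positive ℝ (Fin n → ℝ)).map (A.map (Int.cast : ℤ → ℝ)).mulVecLin := by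
    ext v
    simp [hC, eq_comm]
  subst hcone
  obtain ⟨_, hvC, hv0, hTv⟩ := exists_mem_ne_zero_map_eq_zero_of_finrank_le
    (PointedCone.map _ _).toAddSubmonoid.toAddSubsemigroup R hRC
    (fun h => hCR (h.antisymm hRC)) (T.map (Rat.cast : ℚ → ℝ)).mulVecLin (by simpa using hk)
  obtain ⟨x, hx, rfl⟩ := PointedCone.mem_map.1 hvC
  obtain ⟨z, hz, hTAz, hAz⟩ := Matrix.exists_nonneg_int_of_nonneg_real (T * Aq) Aq hx
    (by rw [hTA, ← mulVec_mulVec]; exact hTv) (by rwa [hAq])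
  refine ⟨xstar + z, add_nonneg hxstar.1 hz, ?_, fun h => hAz ?_⟩
  · change (T * Aq) *ᵥ (Int.cast ∘ (xstar + z)) = T *ᵥ (Int.cast ∘ b)
    rw [show (Int.cast ∘ (xstar + z) : Fin n → ℚ) = Int.cast ∘ xstar + Int.cast ∘ z from
      funext fun j => Int.cast_add _ _, mulVec_add, hTAz, add_zero, ← mulVec_mulVec,
      hAq_mulVec, hxstar.2]
  · rw [mulVec_add, hxstar.2, add_eq_left] at h
    rw [hAq_mulVec, h]
    rfl
end

section
/- Let R be an r-dimensional linear subspace of ℝ^m, let B₁,…,B_r be a basis of R, and set B_{r+1} = −Σ_{i=1}^{r} B_i. Let P ∈ ℝ^{m×p} be a matrix such that the cone C(P) = {Py : y ∈ ℝ^p, y ≥ 0} is pointed and C(P) ∩ R = {0}. Then for every l ∈ {1,…,r+1}, the cone generated by the vectors {B_i : 1 ≤ i ≤ r+1, i ≠ l} together with the columns of P is pointed. -/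
/-!
If `v` and `-v` both lie in the cone, adding the two representations gives
`∑ μᵢ Bᵢ + P (y + y') = 0` with `μ ≥ 0`, `μ_l = 0`. Then `P (y + y')` lies in `C(P) ∩ R = {0}`,
so `∑ μᵢ Bᵢ = 0`; the only linear relations among `B₁, …, B_{r+1}` have constant coefficients,
and `μ_l = 0` forces `μ = 0`. Hence `v` and `-v` lie in `C(P)`, which is pointed.
-/

open Finset

section SnocNegSum

variable {K M : Type*} [Ring K] [AddCommGroup M] [Module K M] {r : ℕ}

theorem sum_smul_snoc_neg_sum (B : Fin r → M) (μ : Fin (r + 1) → K) :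
    ∑ i, μ i • Fin.snoc (α := fun _ => M) B (-∑ j, B j) i =
      ∑ i, (μ i.castSucc - μ (Fin.last r)) • B i := by
  simp [Fin.sum_univ_castSucc, sub_smul, smul_sum, sum_sub_distrib, ← sub_eq_add_neg]

theorem sum_smul_snoc_neg_sum_mem_span (B : Fin r → M) (μ : Fin (r + 1) → K) :
    ∑ i, μ i • Fin.snoc (α := fun _ => M) B (-∑ j, B j) i ∈ Submodule.span K (Set.range B) := by
  rw [sum_smul_snoc_neg_sum]
  exact Submodule.sum_mem _ fun i _ => Submodule.smul_mem _ _ (Submodule.subset_span ⟨i, rfl⟩)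

theorem eq_last_of_sum_smul_snoc_neg_sum_eq_zero {B : Fin r → M} (hB : LinearIndependent K B)
    {μ : Fin (r + 1) → K} (hμ : ∑ i, μ i • Fin.snoc (α := fun _ => M) B (-∑ j, B j) i = 0)
    (i : Fin (r + 1)) :
    μ i = μ (Fin.last r) := by
  rw [sum_smul_snoc_neg_sum] at hμ
  have hcoef := Fintype.linearIndependent_iff.mp hB _ hμ
  induction i using Fin.lastCases with
  | last => rfl
  | cast j => exact sub_eq_zero.mp (hcoef j)

theorem eq_zero_of_sum_smul_snoc_neg_sum_eq_zero {B : Fin r → M} (hB : LinearIndependent K B)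
    {μ : Fin (r + 1) → K} (hμ : ∑ i, μ i • Fin.snoc (α := fun _ => M) B (-∑ j, B j) i = 0)
    {l : Fin (r + 1)} (hl : μ l = 0) : μ = 0 := by
  have hlast : μ (Fin.last r) = 0 := by
    rw [← hl, eq_last_of_sum_smul_snoc_neg_sum_eq_zero hB hμ l]
  funext i
  rw [eq_last_of_sum_smul_snoc_neg_sum_eq_zero hB hμ i, hlast, Pi.zero_apply]

end SnocNegSum

theorem stmt_15_general (m r p : ℕ) (R : Submodule ℝ (Fin m → ℝ))
    (B : Fin r → Fin m → ℝ) (hBindep : LinearIndependent ℝ B)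
    (hBspan : Submodule.span ℝ (Set.range B) = R)
    (P : Matrix (Fin m) (Fin p) ℝ)
    (hPpointed : ∀ v : Fin m → ℝ,
      (∃ y : Fin p → ℝ, 0 ≤ y ∧ v = P.mulVec y) →
      (∃ y : Fin p → ℝ, 0 ≤ y ∧ -v = P.mulVec y) → v = 0)
    (hPR : ∀ v : Fin m → ℝ, (∃ y : Fin p → ℝ, 0 ≤ y ∧ v = P.mulVec y) →
      v ∈ R → v = 0) :
    ∀ l : Fin (r + 1), ∀ v : Fin m → ℝ,
      (∃ (lam : Fin (r + 1) → ℝ) (y : Fin p → ℝ), 0 ≤ lam ∧ 0 ≤ y ∧ lam l = 0 ∧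
        v = (∑ i : Fin (r + 1), lam i • Fin.snoc B (-(∑ i : Fin r, B i)) i) +
          P.mulVec y) →
      (∃ (lam : Fin (r + 1) → ℝ) (y : Fin p → ℝ), 0 ≤ lam ∧ 0 ≤ y ∧ lam l = 0 ∧
        -v = (∑ i : Fin (r + 1), lam i • Fin.snoc B (-(∑ i : Fin r, B i)) i) +
          P.mulVec y) →
      v = 0 := by
  rintro l v ⟨lam, y, hlam, hy, hl, hv⟩ ⟨lam', y', hlam', hy', hl', hv'⟩
  set b : Fin (r + 1) → Fin m → ℝ := Fin.snoc B (-∑ i, B i)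
  have hsum : ∑ i, (lam + lam') i • b i + P.mulVec (y + y') = 0 := by
    simp only [Pi.add_apply, add_smul, sum_add_distrib, Matrix.mulVec_add]
    rw [add_add_add_comm, ← hv, ← hv', add_neg_cancel]
  have hP0 : P.mulVec (y + y') = 0 := by
    refine hPR _ ⟨_, add_nonneg hy hy', rfl⟩ ?_
    rw [eq_neg_of_add_eq_zero_right hsum, ← hBspan]
    exact neg_mem (sum_smul_snoc_neg_sum_mem_span B _)
  have hμ : lam + lam' = 0 := by
    refine eq_zero_of_sum_smul_snoc_neg_sum_eq_zero hBindep (l := l) ?_ (by simp [hl, hl'])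
    simpa [hP0] using hsum
  obtain ⟨rfl, rfl⟩ := (add_eq_zero_iff_of_nonneg hlam hlam').mp hμ
  exact hPpointed v ⟨y, hy, by simpa using hv⟩ ⟨y', hy', by simpa using hv'⟩

/-- Claim 2 in the proof of Theorem `minsize`: with `B₁, …, B_r` a basis of an
`r`-dimensional subspace `R`, `B_{r+1} = -∑ B_i`, and `P` a matrix whose cone
`C(P)` is pointed and meets `R` only in `0`, for every `l` the cone generated
by `{B_i : i ≠ l}` together with the columns of `P` is pointed. -/
theorem stmt_15 (m r p : ℕ) (R : Submodule ℝ (Fin m → ℝ))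
    (hRdim : Module.finrank ℝ R = r)
    (B : Fin r → Fin m → ℝ) (hBindep : LinearIndependent ℝ B)
    (hBspan : Submodule.span ℝ (Set.range B) = R)
    (P : Matrix (Fin m) (Fin p) ℝ)
    (hPpointed : ∀ v : Fin m → ℝ,
      (∃ y : Fin p → ℝ, 0 ≤ y ∧ v = P.mulVec y) →
      (∃ y : Fin p → ℝ, 0 ≤ y ∧ -v = P.mulVec y) → v = 0)
    (hPR : ∀ v : Fin m → ℝ, (∃ y : Fin p → ℝ, 0 ≤ y ∧ v = P.mulVec y) →
      v ∈ R → v = 0) :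
    ∀ l : Fin (r + 1), ∀ v : Fin m → ℝ,
      (∃ (lam : Fin (r + 1) → ℝ) (y : Fin p → ℝ), 0 ≤ lam ∧ 0 ≤ y ∧ lam l = 0 ∧
        v = (∑ i : Fin (r + 1), lam i • Fin.snoc B (-(∑ i : Fin r, B i)) i) +
          P.mulVec y) →
      (∃ (lam : Fin (r + 1) → ℝ) (y : Fin p → ℝ), 0 ≤ lam ∧ 0 ≤ y ∧ lam l = 0 ∧
        -v = (∑ i : Fin (r + 1), lam i • Fin.snoc B (-(∑ i : Fin r, B i)) i) +
          P.mulVec y) →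
      v = 0 :=
  stmt_15_general m r p R B hBindep hBspan P hPpointed hPR
end

section
/- Let n ≥ 1, let α ∈ ℤ^n with α_j ≥ 1 for all j, and let β be a nonnegative integer. Then the number σ_β of x ∈ ℤ^n with x ≥ 0 and Σ_{j=1}^{n} α_j x_j = β is finite and satisfies (σ_β : ℂ) = (2^{β−1}/π) ∫_{−π}^{π} ( ∏_{j=1}^{n} 2^{α_j} / (2^{α_j} − e^{i·α_j·θ}) ) · e^{−i·β·θ} dθ, where i is the imaginary unit. -/
/-!
Put `z = e^{iθ}/2`. Then `2^{α_j}/(2^{α_j} - e^{iα_jθ}) = (1 - z^{α_j})⁻¹`, and multiplying out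
the geometric series gives `∏_j (1 - z^{α_j})⁻¹ = ∑_{x ∈ ℕⁿ} z^{α·x}`, dominated uniformly in `θ`
by `∑_x 2^{-α·x} < ∞`. Integrating term by term against `e^{-iκθ}`, orthogonality of the
characters `e^{imθ}` on `[-π, π]` keeps exactly the terms with `α·x = κ`, each contributing
`2π·2^{-κ}`.
-/

open Complex
open scoped Real

section FinProd

variable {R : Type*} [NormedCommRing R]

theorem Fin.prod_consEquiv {n : ℕ} {κ : Fin (n + 1) → Type*} (f : ∀ j, κ j → R)
    (p : κ 0 × ∀ j : Fin n, κ j.succ) :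
    ∏ j, f j (Fin.consEquiv κ p j) = f 0 p.1 * ∏ j : Fin n, f j.succ (p.2 j) := by
  simp [Fin.prod_univ_succ]

theorem summable_norm_fin_prod :
    ∀ {n : ℕ} {κ : Fin n → Type*} (f : ∀ j, κ j → R), (∀ j, Summable fun k => ‖f j k‖) →
      Summable fun x : (∀ j, κ j) => ‖∏ j, f j (x j)‖
  | 0, _, _, _ => .of_finite
  | _ + 1, κ, f, hf => by
    refine (Fin.consEquiv κ).summable_iff.mp ?_
    simpa only [Function.comp_def, Fin.prod_consEquiv] using
      (hf 0).mul_norm (summable_norm_fin_prod (fun j => f j.succ) fun j => hf j.succ)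

theorem tsum_fin_prod_eq_prod_tsum [CompleteSpace R] :
    ∀ {n : ℕ} {κ : Fin n → Type*} (f : ∀ j, κ j → R), (∀ j, Summable fun k => ‖f j k‖) →
      ∑' x : (∀ j, κ j), ∏ j, f j (x j) = ∏ j, ∑' k, f j k
  | 0, _, _, _ => by simp
  | _ + 1, κ, f, hf => by
    rw [← (Fin.consEquiv κ).tsum_eq, Fin.prod_univ_succ,
      ← tsum_fin_prod_eq_prod_tsum _ fun j => hf j.succ,
      tsum_mul_tsum_of_summable_norm (hf 0) (summable_norm_fin_prod _ fun j => hf j.succ)]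
    simp only [Fin.prod_consEquiv]

end FinProd

theorem hasSum_fin_prod_pow {K : Type*} [NormedField K] [CompleteSpace K] {n : ℕ}
    {w : Fin n → K} (hw : ∀ j, ‖w j‖ < 1) :
    HasSum (fun x : Fin n → ℕ => ∏ j, w j ^ x j) (∏ j, (1 - w j)⁻¹) := by
  have hgeom j := summable_norm_geometric_of_norm_lt_one (hw j)
  have := (summable_norm_fin_prod _ hgeom).of_norm.hasSum
  rwa [tsum_fin_prod_eq_prod_tsum _ hgeom,
    Finset.prod_congr rfl fun j _ => tsum_geometric_of_norm_lt_one (hw j)] at this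

theorem prod_pow_pow_eq_pow_dotProduct {M ι : Type*} [CommMonoid M] [Fintype ι] (r : M)
    (a x : ι → ℕ) : ∏ j, (r ^ a j) ^ x j = r ^ (a ⬝ᵥ x) := by
  simp only [← pow_mul, dotProduct, Finset.prod_pow_eq_pow_sum]

theorem hasSum_pow_dotProduct {K : Type*} [NormedField K] [CompleteSpace K] {n : ℕ}
    {a : Fin n → ℕ} (ha : ∀ j, a j ≠ 0) {z : K} (hz : ‖z‖ < 1) :
    HasSum (fun x : Fin n → ℕ => z ^ (a ⬝ᵥ x)) (∏ j, (1 - z ^ a j)⁻¹) := by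
  simpa only [prod_pow_pow_eq_pow_dotProduct] using
    hasSum_fin_prod_pow (w := fun j => z ^ a j) fun j => by
      rw [norm_pow]; exact pow_lt_one₀ (norm_nonneg z) hz (ha j)

theorem finite_setOf_dotProduct_eq {ι : Type*} [Fintype ι] {a : ι → ℕ} (ha : ∀ i, a i ≠ 0)
    (β : ℕ) : {x : ι → ℕ | a ⬝ᵥ x = β}.Finite := by
  classical
  refine (Set.finite_Iic fun _ => β).subset fun x hx i => ?_
  calc x i ≤ a i * x i := Nat.le_mul_of_pos_left _ (Nat.pos_of_ne_zero (ha i))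
    _ ≤ a ⬝ᵥ x := Finset.single_le_sum (f := fun j => a j * x j) (by simp) (Finset.mem_univ i)
    _ = β := hx

theorem Set.Finite.hasSum_ite {α M : Type*} [AddCommMonoid M] [TopologicalSpace M]
    {p : α → Prop} [DecidablePred p] (hp : {x | p x}.Finite) (c : M) :
    HasSum (fun x => if p x then c else 0) ({x | p x}.ncard • c) := by
  have h := hasSum_sum_of_ne_finset_zero (L := .unconditional α)
    (f := fun x => if p x then c else 0) (s := hp.toFinset) fun x hx => if_neg (by simpa using hx)
  rwa [Finset.sum_ite_of_true fun x hx => by simpa using hx, Finset.sum_const,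
    ← Set.ncard_eq_toFinset_card _ hp] at h

theorem intervalIntegral.hasSum_integral_of_summable_bound {ι E : Type*} [Countable ι]
    [NormedAddCommGroup E] [NormedSpace ℝ E] {a b : ℝ} {F : ι → ℝ → E} {f : ℝ → E}
    (bound : ι → ℝ) (hF : ∀ i, Continuous (F i)) (hF_le : ∀ i t, ‖F i t‖ ≤ bound i)
    (h_bound : Summable bound) (h_lim : ∀ t, HasSum (F · t) (f t)) :
    HasSum (fun i => ∫ t in a..b, F i t) (∫ t in a..b, f t) :=
  intervalIntegral.hasSum_integral_of_dominated_convergence (fun i _ => bound i)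
    (fun i => (hF i).aestronglyMeasurable) (fun i => .of_forall fun t _ => hF_le i t)
    (.of_forall fun _ _ => h_bound) intervalIntegrable_const (.of_forall fun t _ => h_lim t)

theorem integral_exp_int_mul_mul_I (m : ℤ) :
    ∫ θ in -π..π, exp (m * θ * I) = if m = 0 then 2 * (π : ℂ) else 0 := by
  split_ifs with hm
  · simp [hm, two_mul]
  · have hc : (m * I : ℂ) ≠ 0 := by simp [hm, I_ne_zero]
    have hperiod : exp (m * I * π) = exp (m * I * (-π : ℝ)) := by
      rw [show (m * I * π : ℂ) = m * I * (-π : ℝ) + m * (2 * π * I) by push_cast; ring, exp_add,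
        exp_int_mul_two_pi_mul_I, mul_one]
    simp_rw [mul_right_comm _ _ I]
    rw [integral_exp_mul_complex hc, hperiod, sub_self, zero_div]

theorem integral_pow_mul_exp (r : ℂ) (m β : ℕ) :
    ∫ θ in -π..π, (r * exp (θ * I)) ^ m * exp (-(β * θ * I)) =
      if m = β then 2 * π * r ^ β else 0 := by
  have h (θ : ℝ) : (r * exp (θ * I)) ^ m * exp (-(β * θ * I)) =
      r ^ m * exp (((m : ℤ) - β : ℤ) * θ * I) := by
    rw [mul_pow, ← exp_nat_mul, mul_assoc, ← exp_add]
    push_cast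
    ring_nf
  simp_rw [h, intervalIntegral.integral_const_mul, integral_exp_int_mul_mul_I, sub_eq_zero,
    Nat.cast_inj]
  split_ifs with hm
  · rw [hm]; ring
  · rw [mul_zero]

theorem integral_prod_inv_one_sub_pow_mul_exp {n : ℕ} {a : Fin n → ℕ} (ha : ∀ j, a j ≠ 0)
    (β : ℕ) {r : ℂ} (hr : ‖r‖ < 1) :
    ∫ θ in -π..π, (∏ j, (1 - (r * exp (θ * I)) ^ a j)⁻¹) * exp (-(β * θ * I)) =
      2 * π * r ^ β * {x : Fin n → ℕ | a ⬝ᵥ x = β}.ncard := by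
  have hnorm (θ : ℝ) : ‖r * exp (θ * I)‖ = ‖r‖ := by simp [norm_exp_ofReal_mul_I]
  have hcont (m : ℕ) : Continuous fun θ : ℝ => (r * exp (θ * I)) ^ m * exp (-(β * θ * I)) := by
    fun_prop
  have hle (m : ℕ) (θ : ℝ) : ‖(r * exp (θ * I)) ^ m * exp (-(β * θ * I))‖ ≤ ‖r‖ ^ m := by
    rw [norm_mul, norm_pow, hnorm, ← neg_mul, ← ofReal_natCast, ← ofReal_mul, ← ofReal_neg,
      norm_exp_ofReal_mul_I, mul_one]
  have hterms := intervalIntegral.hasSum_integral_of_summable_bound (a := -π) (b := π)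
    (fun x => ‖r‖ ^ (a ⬝ᵥ x)) (fun x => hcont (a ⬝ᵥ x)) (fun x => hle (a ⬝ᵥ x))
    (hasSum_pow_dotProduct ha (z := ‖r‖) (by simpa)).summable
    fun θ => (hasSum_pow_dotProduct ha (hnorm θ ▸ hr)).mul_right (exp (-(β * θ * I)))
  simp only [integral_pow_mul_exp] at hterms
  rw [hterms.unique ((finite_setOf_dotProduct_eq ha β).hasSum_ite _), nsmul_eq_mul, mul_comm]

theorem setOf_nonneg_dotProduct_eq_image {ι : Type*} [Fintype ι] (a : ι → ℕ) (β : ℕ) :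
    {x : ι → ℤ | 0 ≤ x ∧ ∑ j, (a j : ℤ) * x j = β} =
      (fun y j => (y j : ℤ)) '' {y : ι → ℕ | a ⬝ᵥ y = β} := by
  ext x
  constructor
  · rintro ⟨hx, hsum⟩
    refine ⟨fun j => (x j).toNat, ?_, funext fun j => Int.toNat_of_nonneg (hx j)⟩
    have : ((a ⬝ᵥ fun j => (x j).toNat : ℕ) : ℤ) = β := by
      push_cast [dotProduct, Int.toNat_of_nonneg (hx _)]
      exact hsum
    exact_mod_cast this
  · rintro ⟨y, hy, rfl⟩
    refine ⟨fun j => Int.natCast_nonneg _, ?_⟩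
    have : ((a ⬝ᵥ y : ℕ) : ℤ) = β := congrArg _ hy
    push_cast [dotProduct] at this
    exact this

theorem stmt_18_general (n : ℕ) (α : Fin n → ℤ) (hα : ∀ j, 1 ≤ α j) (β : ℕ) :
    {x : Fin n → ℤ | 0 ≤ x ∧ ∑ j, α j * x j = (β : ℤ)}.Finite ∧
    ((Set.ncard {x : Fin n → ℤ | 0 ≤ x ∧ ∑ j, α j * x j = (β : ℤ)} : ℕ) : ℂ) =
      ((2 : ℂ) ^ ((β : ℤ) - 1) / (Real.pi : ℂ)) *
        ∫ θ in (-Real.pi)..Real.pi,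
          (∏ j : Fin n,
            (2 : ℂ) ^ (α j) /
              ((2 : ℂ) ^ (α j) - Complex.exp (Complex.I * (α j : ℂ) * (θ : ℂ)))) *
            Complex.exp (-Complex.I * (β : ℂ) * (θ : ℂ)) := by
  lift α to Fin n → ℕ using fun j => zero_le_one.trans (hα j)
  dsimp only at hα ⊢
  have ha j : α j ≠ 0 := Nat.one_le_iff_ne_zero.mp (Nat.one_le_cast.mp (hα j))
  rw [setOf_nonneg_dotProduct_eq_image, Set.ncard_image_of_injective _
    fun x y hxy => funext fun j => Nat.cast_injective (congrFun hxy j)]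
  refine ⟨(finite_setOf_dotProduct_eq ha β).image _, ?_⟩
  have hfactor (θ : ℝ) (m : ℕ) : (2 : ℂ) ^ (m : ℤ) / (2 ^ (m : ℤ) - exp (I * (m : ℤ) * θ)) =
      (1 - (2⁻¹ * exp (θ * I)) ^ m)⁻¹ := by
    rw [mul_pow, ← exp_nat_mul, zpow_natCast, Int.cast_natCast, inv_pow, ← div_eq_inv_mul,
      one_sub_div (pow_ne_zero _ two_ne_zero), inv_div]
    ring_nf
  have hexp (θ : ℝ) : exp (-I * β * θ) = exp (-(β * θ * I)) := by ring_nf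
  simp_rw [hfactor, hexp, integral_prod_inv_one_sub_pow_mul_exp ha β (r := 2⁻¹) (by norm_num),
    zpow_sub₀ (two_ne_zero' ℂ), zpow_natCast, zpow_one, inv_pow]
  field_simp

/-- Proposition `solnumber2`: for `α_j ≥ 1`, the number `σ_β` of `x ∈ ℤⁿ` with
`x ≥ 0` and `∑ α_j x_j = β` is finite and given by
`σ_β = (2^{β-1}/π) ∫_{-π}^{π} (∏_j 2^{α_j}/(2^{α_j} - e^{iα_jθ})) e^{-iβθ} dθ`. -/
theorem stmt_18 (n : ℕ) (hn : 1 ≤ n) (α : Fin n → ℤ) (hα : ∀ j, 1 ≤ α j) (β : ℕ) :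
    {x : Fin n → ℤ | 0 ≤ x ∧ ∑ j, α j * x j = (β : ℤ)}.Finite ∧
    ((Set.ncard {x : Fin n → ℤ | 0 ≤ x ∧ ∑ j, α j * x j = (β : ℤ)} : ℕ) : ℂ) =
      ((2 : ℂ) ^ ((β : ℤ) - 1) / (Real.pi : ℂ)) *
        ∫ θ in (-Real.pi)..Real.pi,
          (∏ j : Fin n,
            (2 : ℂ) ^ (α j) /
              ((2 : ℂ) ^ (α j) - Complex.exp (Complex.I * (α j : ℂ) * (θ : ℂ)))) *
            Complex.exp (-Complex.I * (β : ℂ) * (θ : ℂ)) :=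
  stmt_18_general n α hα β
end
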